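/- arXiv:math/0303070 — 5 statements merged into one kernel-verified Lean document; each statement's English description precedes it below -/
import Mathlib

section
/- Let M_C = [[A, C],[0, B]] be a 2×2 upper triangular operator matrix on H₁ ⊕ H₂. If B has the single-valued extension property, then for every x ∈ H₁, the local spectrum of M_C at x ⊕ 0 equals the local spectrum of A at x. -/
open Filter

section Defs

variable {X : Type*} [NormedAddCommGroup X] [NormedSpace ℂ X]

/-- The local resolvent set of `T` at `x`: the union of all open sets `U` admitting an
analytic function `f : U → X` with `(T - λ) f(λ) = x` on `U`. -/
def localResolventSet (T : X →L[ℂ] X) (x : X) : Set ℂ :=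
  {μ | ∃ U : Set ℂ, IsOpen U ∧ μ ∈ U ∧ ∃ f : ℂ → X, AnalyticOnNhd ℂ f U ∧
    ∀ z ∈ U, (T - z • (1 : X →L[ℂ] X)) (f z) = x}

/-- The local spectrum of `T` at `x`. -/
def localSpectrum (T : X →L[ℂ] X) (x : X) : Set ℂ :=
  (localResolventSet T x)ᶜ

/-- `T` has the single-valued extension property: on every open `U`, the only analytic
solution of `(T - λ) f(λ) = 0` is `f ≡ 0`. -/
def HasSVEP (T : X →L[ℂ] X) : Prop :=
  ∀ U : Set ℂ, IsOpen U → ∀ f : ℂ → X, AnalyticOnNhd ℂ f U →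
    (∀ z ∈ U, (T - z • (1 : X →L[ℂ] X)) (f z) = 0) → ∀ z ∈ U, f z = 0

end Defs

variable {H₁ H₂ : Type*}
  [NormedAddCommGroup H₁] [InnerProductSpace ℂ H₁] [CompleteSpace H₁]
  [NormedAddCommGroup H₂] [InnerProductSpace ℂ H₂] [CompleteSpace H₂]

/-- Let `M` be the upper triangular operator matrix `[[A, C], [0, B]]` on `H₁ ⊕ H₂`.
If `B` has the single-valued extension property, then for every `x ∈ H₁` the local
spectrum of `M` at `x ⊕ 0` equals the local spectrum of `A` at `x`. -/
theorem localSpectrum_upper_triangular (A : H₁ →L[ℂ] H₁) (B : H₂ →L[ℂ] H₂)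
    (C : H₂ →L[ℂ] H₁) (M : (H₁ × H₂) →L[ℂ] (H₁ × H₂))
    (hM : ∀ p : H₁ × H₂, M p = (A p.1 + C p.2, B p.2))
    (hB : HasSVEP B) (x : H₁) :
    localSpectrum M (x, 0) = localSpectrum A x := by
  have key : localResolventSet M (x, 0) = localResolventSet A x := by
    ext μ
    constructor
    · rintro ⟨U, hU, hμ, g, hg, hgx⟩
      refine ⟨U, hU, hμ, fun z => (g z).1, ?_, ?_⟩
      · exact fun z hz => ((ContinuousLinearMap.fst ℂ H₁ H₂).analyticAt _).comp (hg z hz)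
      · intro z hz
        have h2 : ∀ w ∈ U, (B - w • (1 : H₂ →L[ℂ] H₂)) ((g w).2) = 0 := by
          intro w hw
          have h := congrArg Prod.snd (hgx w hw)
          simpa [hM, ContinuousLinearMap.sub_apply, ContinuousLinearMap.smul_apply,
            sub_eq_zero] using h
        have hg2 : ∀ w ∈ U, (g w).2 = 0 :=
          hB U hU (fun w => (g w).2)
            (fun w hw => ((ContinuousLinearMap.snd ℂ H₁ H₂).analyticAt _).comp (hg w hw)) h2
        have h1 := congrArg Prod.fst (hgx z hz)
        simpa [hM, ContinuousLinearMap.sub_apply, ContinuousLinearMap.smul_apply,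
          hg2 z hz] using h1
    · rintro ⟨U, hU, hμ, f, hf, hfx⟩
      refine ⟨U, hU, hμ, fun z => (f z, 0), ?_, ?_⟩
      · exact fun z hz => (hf z hz).prod analyticAt_const
      · intro z hz
        have h := hfx z hz
        simp only [ContinuousLinearMap.sub_apply, ContinuousLinearMap.smul_apply,
          ContinuousLinearMap.one_apply] at h ⊢
        rw [hM]
        simp [Prod.ext_iff, Prod.smul_def, h]
  unfold localSpectrum
  rw [key]
end

section
/- Let S be a unilateral weighted shift with positive bounded weights ω_n and β_n = ω_0⋯ω_{n-1} (β_0 = 1), and let r₂(S) = liminf β_n^{1/n}. Then for every non-zero x ∈ H, the closed disc {λ ∈ ℂ : |λ| ≤ r₂(S)} is contained in the local spectrum σ_S(x). -/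
open Filter

variable {H : Type*} [NormedAddCommGroup H] [InnerProductSpace ℂ H] [CompleteSpace H]

/-!
If `μ` lies in the local resolvent set, there is an analytic `f` near `μ` with
`(S - z) f(z) = x`. For `|z| < r₂(S)` the vector `k(z̄) = ∑ z̄ⁿ / βₙ eₙ` lies in the kernel of
`(S - z)*`, so `g(z) = ⟪k(z̄), x⟫ = ∑ ⟪eₙ, x⟫ zⁿ / βₙ` vanishes near `μ` when `|μ| < r₂(S)`.
Since `g` is a power series converging on the open disc of radius `r₂(S)`, all its coefficients
vanish, i.e. `x = 0`. The local spectrum is closed, which covers the boundary circle when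
`r₂(S) > 0`. When `r₂(S) = 0` the disc is `{0}`, and letting `z → 0` in the coordinates of
`(S - z) f(z) = x` shows inductively that every coordinate of `x` vanishes.
-/

open scoped InnerProductSpace Topology NNReal ENNReal
open Finset FormalMultilinearSeries

section LocalSpectrum

variable {X : Type*} [NormedAddCommGroup X] [NormedSpace ℂ X]

theorem isOpen_localResolventSet (T : X →L[ℂ] X) (x : X) : IsOpen (localResolventSet T x) :=
  isOpen_iff_forall_mem_open.mpr fun _ ⟨U, hU, hμ, f, hf, hfx⟩ =>
    ⟨U, fun _ hz => ⟨U, hU, hz, f, hf, hfx⟩, hU, hμ⟩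

theorem isClosed_localSpectrum (T : X →L[ℂ] X) (x : X) : IsClosed (localSpectrum T x) :=
  (isOpen_localResolventSet T x).isClosed_compl

end LocalSpectrum

theorem eqOn_zero_of_mul_eqOn_zero {𝕜 : Type*} [NontriviallyNormedField 𝕜] {U : Set 𝕜}
    (hU : U ∈ 𝓝 0) {φ : 𝕜 → 𝕜} (hφ : ContinuousAt φ 0) (h : ∀ z ∈ U, z * φ z = 0) :
    ∀ z ∈ U, φ z = 0 := by
  intro z hz
  rcases eq_or_ne z 0 with rfl | hz0
  · have hφ0 : φ =ᶠ[𝓝[≠] 0] fun _ => 0 := by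
      filter_upwards [nhdsWithin_le_nhds hU, self_mem_nhdsWithin] with y hy hy0
      exact (mul_eq_zero.mp (h y hy)).resolve_left hy0
    exact tendsto_nhds_unique (hφ.tendsto.mono_left nhdsWithin_le_nhds)
      (tendsto_const_nhds.congr' hφ0.symm)
  · exact (mul_eq_zero.mp (h z hz)).resolve_left hz0

theorem eventually_pow_le_of_lt_liminf_rpow_inv {β : ℕ → ℝ} (hβ : ∀ n, 0 ≤ β n) {ρ : ℝ}
    (hρ0 : 0 ≤ ρ) (hρ : ρ < atTop.liminf fun n => β n ^ (n : ℝ)⁻¹) :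
    ∀ᶠ n in atTop, ρ ^ n ≤ β n := by
  have hbdd : IsBoundedUnder (· ≥ ·) atTop fun n => β n ^ (n : ℝ)⁻¹ :=
    isBoundedUnder_of ⟨0, fun n => Real.rpow_nonneg (hβ n) _⟩
  filter_upwards [eventually_lt_of_lt_liminf hρ hbdd, eventually_ne_atTop 0] with n hn hn0
  calc ρ ^ n ≤ (β n ^ (n : ℝ)⁻¹) ^ n := pow_le_pow_left₀ hρ0 hn.le n
    _ = β n := Real.rpow_inv_natCast_pow (hβ n) hn0

namespace HilbertBasis

variable {ι 𝕜 E F : Type*} [RCLike 𝕜] [NormedAddCommGroup E] [InnerProductSpace 𝕜 E]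
  [NormedAddCommGroup F] [InnerProductSpace 𝕜 F] (b : HilbertBasis ι 𝕜 E)

theorem hasSum_inner_apply (T : E →L[𝕜] F) (u : F) (v : E) :
    HasSum (fun i => ⟪b i, v⟫_𝕜 * ⟪u, T (b i)⟫_𝕜) ⟪u, T v⟫_𝕜 := by
  simpa [b.repr_apply_apply, inner_smul_right] using
    (b.hasSum_repr v).mapL ((innerSL 𝕜 u).comp T)

theorem eq_zero_of_forall_inner_eq_zero {x : E} (h : ∀ i, ⟪b i, x⟫_𝕜 = 0) : x = 0 := by
  refine inner_self_eq_zero.mp ((b.hasSum_inner_mul_inner x x).unique ?_)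
  simp [h, hasSum_zero]

theorem norm_inner_le (v : E) (i : ι) : ‖⟪b i, v⟫_𝕜‖ ≤ ‖v‖ :=
  (norm_inner_le_norm _ _).trans_eq (by rw [b.orthonormal.1 i, one_mul])

theorem le_radius_ofScalars_inner_div (e : HilbertBasis ℕ 𝕜 E) (v : E) {β : ℕ → 𝕜} {ρ : ℝ≥0}
    (hρ : ∀ᶠ n in atTop, (ρ : ℝ) ^ n ≤ ‖β n‖) :
    (ρ : ℝ≥0∞) ≤ (ofScalars 𝕜 fun n => ⟪e n, v⟫_𝕜 / β n).radius := by
  refine le_radius_of_eventually_le _ ‖v‖ ?_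
  filter_upwards [hρ] with n hn
  rw [ofScalars_norm, norm_div]
  calc ‖⟪e n, v⟫_𝕜‖ / ‖β n‖ * ρ ^ n = ‖⟪e n, v⟫_𝕜‖ * (ρ ^ n / ‖β n‖) := by ring
    _ ≤ ‖⟪e n, v⟫_𝕜‖ :=
      mul_le_of_le_one_right (norm_nonneg _) (div_le_one_of_le₀ hn (norm_nonneg _))
    _ ≤ ‖v‖ := e.norm_inner_le v n

theorem summable_inner_div_mul_pow (e : HilbertBasis ℕ 𝕜 E) (v : E) {β : ℕ → 𝕜} {ρ : ℝ≥0}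
    (hρ : ∀ᶠ n in atTop, (ρ : ℝ) ^ n ≤ ‖β n‖) {z : 𝕜} (hz : ‖z‖₊ < ρ) :
    Summable fun n => ⟪e n, v⟫_𝕜 / β n * z ^ n := by
  have hzr : z ∈ Metric.eball 0 (ofScalars 𝕜 fun n => ⟪e n, v⟫_𝕜 / β n).radius := by
    rw [mem_eball_zero_iff]
    exact lt_of_lt_of_le (by exact_mod_cast hz) (e.le_radius_ofScalars_inner_div v hρ)
  simpa only [ofScalars_apply_eq, smul_eq_mul] using (summable_norm_apply _ hzr).of_norm

end HilbertBasis

section WeightedShift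

variable {E : Type*} [NormedAddCommGroup E] [InnerProductSpace ℂ E]

def IsWeightedShift (S : E →L[ℂ] E) (e : HilbertBasis ℕ ℂ E) (w : ℕ → ℂ) : Prop :=
  ∀ n, S (e n) = w n • e (n + 1)

namespace IsWeightedShift

variable {S : E →L[ℂ] E} {e : HilbertBasis ℕ ℂ E} {w : ℕ → ℂ}

theorem inner_zero_apply (hS : IsWeightedShift S e w) (v : E) : ⟪e 0, S v⟫_ℂ = 0 := by
  refine (e.hasSum_inner_apply S (e 0) v).unique ?_
  simp [hS _, inner_smul_right, orthonormal_iff_ite.mp e.orthonormal, hasSum_zero]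

theorem inner_succ_apply (hS : IsWeightedShift S e w) (n : ℕ) (v : E) :
    ⟪e (n + 1), S v⟫_ℂ = w n * ⟪e n, v⟫_ℂ := by
  refine ((e.hasSum_inner_apply S (e (n + 1)) v).unique (hasSum_single n fun k hk => ?_)).trans ?_
  · simp [hS k, inner_smul_right, orthonormal_iff_ite.mp e.orthonormal, Ne.symm hk]
  · simp [hS n, inner_smul_right, e.orthonormal.1 (n + 1), mul_comm]

theorem inner_zero_sub_smul_apply (hS : IsWeightedShift S e w) (z : ℂ) (v : E) :
    ⟪e 0, (S - z • 1) v⟫_ℂ = -(z * ⟪e 0, v⟫_ℂ) := by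
  simp [hS.inner_zero_apply]

theorem inner_succ_sub_smul_apply (hS : IsWeightedShift S e w) (z : ℂ) (n : ℕ) (v : E) :
    ⟪e (n + 1), (S - z • 1) v⟫_ℂ = w n * ⟪e n, v⟫_ℂ - z * ⟪e (n + 1), v⟫_ℂ := by
  simp [hS.inner_succ_apply]

theorem zero_mem_localSpectrum (hS : IsWeightedShift S e w) {x : E} (hx : x ≠ 0) :
    0 ∈ localSpectrum S x := by
  rintro ⟨U, hU, h0U, f, hf, hfx⟩
  have hU0 : U ∈ 𝓝 0 := hU.mem_nhds h0U
  have hcont (n : ℕ) : ContinuousAt (fun z => ⟪e n, f z⟫_ℂ) 0 :=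
    (innerSL ℂ (e n)).continuous.continuousAt.comp (hf 0 h0U).continuousAt
  have step (n : ℕ) (h : ∀ z ∈ U, ⟪e n, x⟫_ℂ = -(z * ⟪e n, f z⟫_ℂ)) :
      ⟪e n, x⟫_ℂ = 0 ∧ ∀ z ∈ U, ⟪e n, f z⟫_ℂ = 0 := by
    have hxn : ⟪e n, x⟫_ℂ = 0 := by simpa using h 0 h0U
    refine ⟨hxn, eqOn_zero_of_mul_eqOn_zero hU0 (hcont n) fun z hz => ?_⟩
    simpa [hxn, eq_comm] using h z hz
  have key (n : ℕ) : ⟪e n, x⟫_ℂ = 0 ∧ ∀ z ∈ U, ⟪e n, f z⟫_ℂ = 0 := by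
    induction n with
    | zero => exact step 0 fun z hz => by rw [← hfx z hz, hS.inner_zero_sub_smul_apply]
    | succ n ih =>
      exact step (n + 1) fun z hz => by
        rw [← hfx z hz, hS.inner_succ_sub_smul_apply, ih.2 z hz, mul_zero, zero_sub]
  exact hx (e.eq_zero_of_forall_inner_eq_zero fun n => (key n).1)

/-- `⟪k(z̄), (S - z) y⟫ = 0`, written in coordinates. -/
theorem tsum_inner_sub_smul_div_mul_pow (hS : IsWeightedShift S e w) (hw : ∀ n, w n ≠ 0)
    {z : ℂ} {y : E} (hy : Summable fun n => ⟪e n, y⟫_ℂ / (∏ i ∈ range n, w i) * z ^ n) :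
    ∑' n, ⟪e n, (S - z • 1) y⟫_ℂ / (∏ i ∈ range n, w i) * z ^ n = 0 := by
  have hsucc (n : ℕ) : ⟪e (n + 1), S y⟫_ℂ / (∏ i ∈ range (n + 1), w i) * z ^ (n + 1) =
      z * (⟪e n, y⟫_ℂ / (∏ i ∈ range n, w i) * z ^ n) := by
    have hβ : ∏ i ∈ range n, w i ≠ 0 := prod_ne_zero_iff.mpr fun i _ => hw i
    rw [hS.inner_succ_apply, prod_range_succ]
    field_simp [hw n]
    ring
  have hSy : HasSum (fun n => ⟪e n, S y⟫_ℂ / (∏ i ∈ range n, w i) * z ^ n)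
      (z * ∑' n, ⟪e n, y⟫_ℂ / (∏ i ∈ range n, w i) * z ^ n) := by
    rw [← hasSum_nat_add_iff' 1]
    simpa [hsucc, hS.inner_zero_apply] using hy.hasSum.mul_left z
  convert (hSy.sub (hy.hasSum.mul_left z)).tsum_eq using 1
  · congr 1 with n
    simp only [_root_.sub_apply, _root_.smul_apply, one_apply_eq_self, inner_sub_right,
      inner_smul_right]
    ring
  · ring

theorem ofScalarsSum_inner_sub_smul_div_eq_zero (hS : IsWeightedShift S e w) (hw : ∀ n, w n ≠ 0)
    {ρ : ℝ≥0} (hρ : ∀ᶠ n in atTop, (ρ : ℝ) ^ n ≤ ‖∏ i ∈ range n, w i‖) {z : ℂ} (hz : ‖z‖₊ < ρ)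
    (y : E) :
    ofScalarsSum (E := ℂ)
      (fun n => ⟪e n, (S - z • 1) y⟫_ℂ / ∏ i ∈ range n, w i) z = 0 := by
  rw [ofScalars_sum_eq]
  exact hS.tsum_inner_sub_smul_div_mul_pow hw (e.summable_inner_div_mul_pow y hρ hz)

theorem mem_localSpectrum_of_norm_lt (hS : IsWeightedShift S e w) (hw : ∀ n, w n ≠ 0)
    {ρ : ℝ} (hρ : ∀ᶠ n in atTop, ρ ^ n ≤ ‖∏ i ∈ range n, w i‖) {μ : ℂ} (hμ : ‖μ‖ < ρ)
    {x : E} (hx : x ≠ 0) : μ ∈ localSpectrum S x := by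
  lift ρ to ℝ≥0 using (norm_nonneg μ).trans hμ.le
  rintro ⟨U, hU, hμU, f, -, hfx⟩
  set c : ℕ → ℂ := fun n => ⟪e n, x⟫_ℂ / ∏ i ∈ range n, w i
  have hρ0 : 0 < ρ := by exact_mod_cast (norm_nonneg μ).trans_lt hμ
  have hρ0' : 0 < (ρ : ℝ≥0∞) := ENNReal.coe_pos.mpr hρ0
  have hradius := e.le_radius_ofScalars_inner_div x hρ
  have hc : HasFPowerSeriesOnBall (ofScalarsSum (E := ℂ) c) (ofScalars ℂ c) 0 ρ :=
    ((ofScalars ℂ c).hasFPowerSeriesOnBall (hρ0'.trans_le hradius)).mono hρ0' hradius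
  have hμρ : μ ∈ Metric.ball 0 (ρ : ℝ) := mem_ball_zero_iff.mpr hμ
  have hzero : ofScalarsSum (E := ℂ) c =ᶠ[𝓝 μ] 0 := by
    filter_upwards [hU.mem_nhds hμU, Metric.isOpen_ball.mem_nhds hμρ] with z hzU hz
    have := hS.ofScalarsSum_inner_sub_smul_div_eq_zero hw hρ (mem_ball_zero_iff.mp hz) (f z)
    rwa [hfx z hzU] at this
  have hball : Set.EqOn (ofScalarsSum (E := ℂ) c) 0 (Metric.ball 0 (ρ : ℝ)) := by
    have := hc.analyticOnNhd
    rw [Metric.eball_coe] at this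
    exact this.eqOn_zero_of_preconnected_of_eventuallyEq_zero (convex_ball 0 _).isPreconnected
      hμρ hzero
  have hc0 : c = 0 := (ofScalars_series_eq_zero ℂ).mp <|
    hc.hasFPowerSeriesAt.eq_zero_of_eventually <|
      hball.eventuallyEq_of_mem (Metric.ball_mem_nhds 0 hρ0)
  refine hx (e.eq_zero_of_forall_inner_eq_zero fun n => ?_)
  simpa [c, prod_ne_zero_iff.mpr fun i _ => hw i] using congrFun hc0 n

end IsWeightedShift

end WeightedShift

theorem closedBall_subset_localSpectrum_general (S : H →L[ℂ] H)
    (e : HilbertBasis ℕ ℂ H) (ω : ℕ → ℝ) (hpos : ∀ n, 0 < ω n)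
    (hS : ∀ n, S (e n) = (ω n : ℂ) • e (n + 1))
    (x : H) (hx : x ≠ 0) :
    Metric.closedBall (0 : ℂ)
        (atTop.liminf fun n : ℕ => (∏ i ∈ Finset.range n, ω i) ^ ((n : ℝ)⁻¹)) ⊆
      localSpectrum S x := by
  set r := atTop.liminf fun n : ℕ => (∏ i ∈ Finset.range n, ω i) ^ ((n : ℝ)⁻¹)
  have hshift : IsWeightedShift S e fun n => (ω n : ℂ) := hS
  have hβ (n : ℕ) : 0 ≤ ∏ i ∈ range n, ω i := prod_nonneg fun i _ => (hpos i).le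
  have hball : Metric.ball 0 r ⊆ localSpectrum S x := by
    intro μ hμ
    obtain ⟨ρ, hμρ, hρr⟩ := exists_between (mem_ball_zero_iff.mp hμ)
    refine hshift.mem_localSpectrum_of_norm_lt (fun n => by exact_mod_cast (hpos n).ne') ?_ hμρ hx
    filter_upwards [eventually_pow_le_of_lt_liminf_rpow_inv hβ ((norm_nonneg μ).trans hμρ.le) hρr]
      with n hn
    rwa [← Complex.ofReal_prod, Complex.norm_real, Real.norm_of_nonneg (hβ n)]
  rcases eq_or_ne r 0 with hr | hr
  · rw [hr, Metric.closedBall_zero, Set.singleton_subset_iff]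
    exact hshift.zero_mem_localSpectrum hx
  · rw [← closure_ball 0 hr]
    exact closure_minimal hball (isClosed_localSpectrum S x)

/-- For a unilateral weighted shift `S` with positive bounded weights `ω` and
`β n = ω 0 ⋯ ω (n-1)`, `r₂(S) = liminf (β n)^(1/n)`, the closed disc of radius `r₂(S)`
is contained in the local spectrum of `S` at every non-zero `x`. -/
theorem closedBall_subset_localSpectrum (S : H →L[ℂ] H)
    (e : HilbertBasis ℕ ℂ H) (ω : ℕ → ℝ) (hpos : ∀ n, 0 < ω n)
    (hbd : ∃ M : ℝ, ∀ n, ω n ≤ M)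
    (hS : ∀ n, S (e n) = (ω n : ℂ) • e (n + 1))
    (x : H) (hx : x ≠ 0) :
    Metric.closedBall (0 : ℂ)
        (atTop.liminf fun n : ℕ => (∏ i ∈ Finset.range n, ω i) ^ ((n : ℝ)⁻¹)) ⊆
      localSpectrum S x :=
  closedBall_subset_localSpectrum_general S e ω hpos hS x hx
end

section
/- Let S be a unilateral weighted shift with positive bounded weights, and set r₃(S) = limsup β_n^{1/n}, R_ω(x) = liminf |β_n/a_n|^{1/n} for x = Σ a_n e_n ≠ 0. If r₃(S) < R_ω(x), then σ_S(x) = {λ ∈ ℂ : |λ| ≤ r₃(S)}. If r₃(S) ≥ R_ω(x), then {λ ∈ ℂ : |λ| ≤ R_ω(x)} ⊆ σ_S(x). -/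
/-!
Write `x = ∑ aₙ eₙ`, `βₙ = ω₀ ⋯ ωₙ₋₁` and `cₙ = aₙ / βₙ`, so that `R_ω(x)` is the radius of
convergence of `∑ cₙ λⁿ`. For `λ ≠ 0` the equation `(S - λ) y = x` determines `y` coordinatewise:
`yₙ = -βₙ (∑_{j ≤ n} cⱼ λʲ) / λⁿ⁺¹`.

If `r₃ < r < R_ω(x)`, then `|cⱼ| ≤ C r⁻ʲ` and `βₙ ≤ sⁿ` eventually for some `s < r`, so these
coordinates are summable uniformly on `|λ| > r` and define an analytic local resolvent there.

Conversely, suppose `0 < |μ| ≤ min (r₃, R_ω(x))` has a local resolvent on `U ∋ μ`. By the identity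
theorem the nonzero power series `∑ cₙ λⁿ` does not vanish at some `λ ∈ U` with `|λ| < |μ|`;
then `βₙ |∑_{j ≤ n} cⱼ λʲ| = |λ|ⁿ⁺¹ |yₙ| ≤ |λ|ⁿ⁺¹ ‖y‖` gives `βₙ = O(|λ|ⁿ)`, contradicting
`|λ| < r₃`. At `μ = 0`, if `a₀ = ⋯ = aₙ₋₁ = 0` then `aₙ = -λ yₙ(λ) → 0` as `λ → 0`.
-/

open Filter
open scoped ENNReal

open Topology

namespace WeightedShift

section RootGrowth

variable {b : ℕ → ℝ}

lemma limsup_root_nonneg (hb : ∀ n, 0 ≤ b n)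
    (hbdd : IsBoundedUnder (· ≤ ·) atTop fun n : ℕ => b n ^ (n : ℝ)⁻¹) :
    0 ≤ atTop.limsup fun n : ℕ => b n ^ (n : ℝ)⁻¹ :=
  le_limsup_of_frequently_le (Frequently.of_forall fun n => Real.rpow_nonneg (hb n) _) hbdd

lemma eventually_le_pow_of_limsup_root_lt (hb : ∀ n, 0 ≤ b n)
    (hbdd : IsBoundedUnder (· ≤ ·) atTop fun n : ℕ => b n ^ (n : ℝ)⁻¹) {s : ℝ}
    (hs : atTop.limsup (fun n : ℕ => b n ^ (n : ℝ)⁻¹) < s) :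
    ∀ᶠ n in atTop, b n ≤ s ^ n := by
  filter_upwards [eventually_lt_of_limsup_lt hs hbdd, eventually_ne_atTop 0] with n hn hn0
  calc b n = (b n ^ (n : ℝ)⁻¹) ^ n := (Real.rpow_inv_natCast_pow (hb n) hn0).symm
    _ ≤ s ^ n := pow_le_pow_left₀ (Real.rpow_nonneg (hb n) _) hn.le n

lemma frequently_pow_lt_of_lt_limsup_root (hb : ∀ n, 0 ≤ b n) {s : ℝ} (hs0 : 0 ≤ s)
    (hs : s < atTop.limsup fun n : ℕ => b n ^ (n : ℝ)⁻¹) :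
    ∃ᶠ n in atTop, s ^ n < b n := by
  have hcobdd : IsCoboundedUnder (· ≤ ·) atTop fun n : ℕ => b n ^ (n : ℝ)⁻¹ :=
    (isBoundedUnder_of ⟨0, fun n => Real.rpow_nonneg (hb n) _⟩).isCoboundedUnder_le
  refine ((frequently_lt_of_lt_limsup hcobdd hs).and_eventually
    (eventually_ne_atTop 0)).mono fun n ⟨hn, hn0⟩ => ?_
  calc s ^ n < (b n ^ (n : ℝ)⁻¹) ^ n := pow_lt_pow_left₀ hn hs0 hn0
    _ = b n := Real.rpow_inv_natCast_pow (hb n) hn0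

lemma eventually_mul_pow_le_pow (K : ℝ) {t s : ℝ} (ht : 0 ≤ t) (hts : t < s) :
    ∀ᶠ n in atTop, K * t ^ n ≤ s ^ n := by
  have hs : 0 < s := ht.trans_lt hts
  have hlim : Tendsto (fun n : ℕ => K * (t / s) ^ n) atTop (𝓝 0) := by
    simpa using (tendsto_pow_atTop_nhds_zero_of_lt_one (div_nonneg ht hs.le)
      ((div_lt_one hs).2 hts)).const_mul K
  filter_upwards [hlim.eventually_le_const zero_lt_one] with n hn
  calc K * t ^ n = K * (t / s) ^ n * s ^ n := by
        rw [div_pow, mul_assoc, div_mul_cancel₀ _ (pow_pos hs n).ne']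
    _ ≤ 1 * s ^ n := by gcongr
    _ = s ^ n := one_mul _

lemma summable_mul_div_pow_of_eventually_le_pow (hb : ∀ n, 0 ≤ b n) {s r : ℝ} (hs : 0 ≤ s)
    (hsr : s < r) (hbs : ∀ᶠ n in atTop, b n ≤ s ^ n) {C : ℝ} (hC : 0 ≤ C) :
    Summable fun n : ℕ => C * (n + 1) * b n / r ^ (n + 1) := by
  have hr : 0 < r := hs.trans_lt hsr
  have hq : ‖s / r‖ < 1 := by
    rwa [Real.norm_of_nonneg (div_nonneg hs hr.le), div_lt_one hr]
  have hgeom : Summable fun n : ℕ => C * (n + 1) * s ^ n / r ^ (n + 1) :=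
    (((summable_pow_mul_geometric_of_norm_lt_one 1 hq).add
      (summable_geometric_of_norm_lt_one hq)).mul_left (C / r)).congr fun n => by
        rw [pow_one, div_pow]
        field_simp
        ring
  refine hgeom.of_norm_bounded_eventually ?_
  rw [Nat.cofinite_eq_atTop]
  filter_upwards [hbs] with n hn
  rw [Real.norm_of_nonneg (div_nonneg (mul_nonneg (by positivity) (hb n)) (by positivity))]
  gcongr

end RootGrowth

lemma radius_ofScalars_div_eq_liminf (a : ℕ → ℂ) {β : ℕ → ℝ} (hβ : ∀ n, 0 < β n) :
    (FormalMultilinearSeries.ofScalars ℂ fun n => a n / β n).radius =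
      atTop.liminf fun n : ℕ =>
        (ENNReal.ofReal (β n) / ENNReal.ofReal ‖a n‖) ^ (n : ℝ)⁻¹ := by
  rw [FormalMultilinearSeries.radius_eq_liminf]
  refine liminf_congr (Eventually.of_forall fun n => ?_)
  rw [ENNReal.coe_rpow_of_nonneg _ (by positivity), ← enorm_eq_nnnorm, ← ofReal_norm,
    FormalMultilinearSeries.ofScalars_norm, norm_div, Complex.norm_real,
    Real.norm_of_nonneg (hβ n).le, ENNReal.ofReal_div_of_pos (hβ n), one_div, one_div,
    ← ENNReal.inv_rpow, ENNReal.inv_div (by simp) (Or.inl (ENNReal.ofReal_pos.2 (hβ n)).ne')]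

lemma exists_hasSum_ne_zero_of_isOpen {c : ℕ → ℂ} (hc : c ≠ 0) {W : Set ℂ} (hWo : IsOpen W)
    (hWne : W.Nonempty)
    (hW : W ⊆ Metric.eball 0 (FormalMultilinearSeries.ofScalars ℂ c).radius) :
    ∃ z ∈ W, ∃ F ≠ 0, HasSum (fun n => c n * z ^ n) F := by
  set p := FormalMultilinearSeries.ofScalars ℂ c
  obtain ⟨z₀, hz₀⟩ := hWne
  have hp : HasFPowerSeriesOnBall p.sum p 0 p.radius :=
    p.hasFPowerSeriesOnBall (pos_of_gt (by simpa using hW hz₀))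
  by_contra! hzero
  have hsum_zero : ∀ z ∈ W, p.sum z = 0 := fun z hz => by
    by_contra hne
    refine hzero z hz _ hne ?_
    simpa [p, FormalMultilinearSeries.ofScalars_apply_eq, mul_comm] using p.hasSum (hW hz)
  have hball : Set.EqOn p.sum 0 (Metric.eball 0 p.radius) :=
    hp.analyticOnNhd.eqOn_zero_of_preconnected_of_eventuallyEq_zero
      (convex_eball 0 _).isPreconnected (hW hz₀)
      (Filter.eventually_of_mem (hWo.mem_nhds hz₀) hsum_zero)
  have hp0 : p = 0 :=
    (hp.hasFPowerSeriesAt.congr (Filter.eventually_of_mem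
      (Metric.isOpen_eball.mem_nhds (Metric.mem_eball_self hp.r_pos)) hball)).eq_zero
  exact hc ((FormalMultilinearSeries.ofScalars_series_eq_zero ℂ).1 hp0)

section Weights

variable {ω : ℕ → ℝ}

def weightProd (ω : ℕ → ℝ) (n : ℕ) : ℝ := ∏ i ∈ Finset.range n, ω i

lemma weightProd_pos (hpos : ∀ n, 0 < ω n) (n : ℕ) : 0 < weightProd ω n :=
  Finset.prod_pos fun i _ => hpos i

lemma weightProd_succ (n : ℕ) : weightProd ω (n + 1) = weightProd ω n * ω n :=
  Finset.prod_range_succ ω n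

lemma isBoundedUnder_root_weightProd (hpos : ∀ n, 0 < ω n) {M : ℝ} (hbd : ∀ n, ω n ≤ M) :
    IsBoundedUnder (· ≤ ·) atTop fun n : ℕ => weightProd ω n ^ (n : ℝ)⁻¹ := by
  refine isBoundedUnder_of ⟨max M 1, fun n => ?_⟩
  rcases eq_or_ne n 0 with rfl | hn
  · simp
  have hprod : weightProd ω n ≤ max M 1 ^ n := by
    simpa [weightProd] using Finset.prod_le_prod (s := Finset.range n) (fun i _ => (hpos i).le)
      fun i _ => (hbd i).trans (le_max_left M 1)
  calc weightProd ω n ^ (n : ℝ)⁻¹ ≤ (max M 1 ^ n) ^ (n : ℝ)⁻¹ :=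
        Real.rpow_le_rpow (weightProd_pos hpos n).le hprod (by positivity)
    _ = max M 1 := Real.pow_rpow_inv_natCast (by positivity) hn

/-- The coefficients `a n / β n` of the function `f` with `x = f(S) e₀` when `x = ∑ a n • e n`. -/
noncomputable def symbolCoeff (ω : ℕ → ℝ) (a : ℕ → ℂ) (n : ℕ) : ℂ := a n / weightProd ω n

noncomputable def resolventCoeff (ω : ℕ → ℝ) (a : ℕ → ℂ) (z : ℂ) (N : ℕ) : ℂ :=
  -(weightProd ω N : ℂ) * (∑ j ∈ Finset.range (N + 1), symbolCoeff ω a j * z ^ j) / z ^ (N + 1)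

variable {a : ℕ → ℂ} {z : ℂ}

lemma neg_mul_resolventCoeff_zero (hpos : ∀ n, 0 < ω n) (hz : z ≠ 0) :
    -z * resolventCoeff ω a z 0 = a 0 := by
  have hβ : (weightProd ω 0 : ℂ) ≠ 0 := by exact_mod_cast (weightProd_pos hpos 0).ne'
  simp only [resolventCoeff, symbolCoeff, zero_add, Finset.sum_range_one, pow_zero, pow_one]
  field_simp

lemma resolventCoeff_recursion (hpos : ∀ n, 0 < ω n) (hz : z ≠ 0) (N : ℕ) :
    ω N * resolventCoeff ω a z N - z * resolventCoeff ω a z (N + 1) = a (N + 1) := by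
  have hβ : (weightProd ω N : ℂ) ≠ 0 := by exact_mod_cast (weightProd_pos hpos N).ne'
  have hω : (ω N : ℂ) ≠ 0 := by exact_mod_cast (hpos N).ne'
  simp only [resolventCoeff, symbolCoeff, Finset.sum_range_succ _ (N + 1), weightProd_succ,
    Complex.ofReal_mul]
  field_simp
  ring

lemma eq_resolventCoeff_of_recursion (hpos : ∀ n, 0 < ω n) (hz : z ≠ 0) {y : ℕ → ℂ}
    (h0 : -z * y 0 = a 0) (hsucc : ∀ n, ω n * y n - z * y (n + 1) = a (n + 1)) (n : ℕ) :
    y n = resolventCoeff ω a z n := by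
  induction n with
  | zero =>
    have := h0.trans (neg_mul_resolventCoeff_zero hpos hz).symm
    exact mul_left_cancel₀ (neg_ne_zero.2 hz) this
  | succ n ih =>
    have := (hsucc n).trans (resolventCoeff_recursion hpos hz n).symm
    rw [ih] at this
    exact mul_left_cancel₀ hz (by linear_combination -this)

lemma resolventCoeff_of_forall_lt_eq_zero (hpos : ∀ n, 0 < ω n) (hz : z ≠ 0) {N : ℕ}
    (ha : ∀ j < N, a j = 0) : resolventCoeff ω a z N = -a N / z := by
  have hβ : (weightProd ω N : ℂ) ≠ 0 := by exact_mod_cast (weightProd_pos hpos N).ne'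
  rw [resolventCoeff, Finset.sum_eq_single_of_mem N (Finset.self_mem_range_succ N)
    fun j hj hjN => by simp [symbolCoeff, ha j (by grind)]]
  simp only [symbolCoeff]
  field_simp
  ring

lemma norm_resolventCoeff_le (hpos : ∀ n, 0 < ω n) {C r : ℝ} (hr : 0 < r)
    (hC : ∀ j, ‖symbolCoeff ω a j‖ * r ^ j ≤ C) (hz : r ≤ ‖z‖) (N : ℕ) :
    ‖resolventCoeff ω a z N‖ ≤ C * (N + 1) * weightProd ω N / r ^ (N + 1) := by
  have hC0 : 0 ≤ C := (by positivity : 0 ≤ ‖symbolCoeff ω a 0‖ * r ^ 0).trans (hC 0)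
  have hterm : ∀ j ∈ Finset.range (N + 1),
      ‖symbolCoeff ω a j * z ^ j / z ^ (N + 1)‖ ≤ C / r ^ (N + 1) := by
    intro j hj
    obtain ⟨k, hk⟩ := Nat.exists_eq_add_of_le (Finset.mem_range.1 hj).le
    rw [norm_div, norm_mul, norm_pow, norm_pow, hk,
      div_le_div_iff₀ (pow_pos (hr.trans_le hz) _) (pow_pos hr _)]
    calc ‖symbolCoeff ω a j‖ * ‖z‖ ^ j * r ^ (j + k)
        = (‖symbolCoeff ω a j‖ * r ^ j) * (‖z‖ ^ j * r ^ k) := by ring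
      _ ≤ C * (‖z‖ ^ j * ‖z‖ ^ k) := by gcongr; exact hC j
      _ = C * ‖z‖ ^ (j + k) := by ring
  calc ‖resolventCoeff ω a z N‖
      = weightProd ω N * ‖∑ j ∈ Finset.range (N + 1), symbolCoeff ω a j * z ^ j / z ^ (N + 1)‖ := by
        rw [resolventCoeff, mul_div_assoc, Finset.sum_div, norm_mul, norm_neg, Complex.norm_real,
          Real.norm_of_nonneg (weightProd_pos hpos N).le]
    _ ≤ weightProd ω N * ∑ _j ∈ Finset.range (N + 1), C / r ^ (N + 1) :=
        mul_le_mul_of_nonneg_left ((norm_sum_le _ _).trans (Finset.sum_le_sum hterm))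
          (weightProd_pos hpos N).le
    _ = C * (N + 1) * weightProd ω N / r ^ (N + 1) := by
        rw [Finset.sum_const, Finset.card_range, nsmul_eq_mul]
        push_cast
        ring

lemma differentiableOn_resolventCoeff (N : ℕ) :
    DifferentiableOn ℂ (fun z => resolventCoeff ω a z N) {0}ᶜ :=
  DifferentiableOn.div (by fun_prop) (by fun_prop) fun _ hz => pow_ne_zero _ hz

end Weights

section Shift

variable {H : Type*} [NormedAddCommGroup H] [InnerProductSpace ℂ H]
  {S : H →L[ℂ] H} {e : HilbertBasis ℕ ℂ H} {ω : ℕ → ℝ}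

lemma repr_eq_of_hasSum {b : ℕ → ℂ} {y : H} (hy : HasSum (fun k => b k • e k) y) (n : ℕ) :
    e.repr y n = b n := by
  classical
  have := hy.mapL (innerSL ℂ (e n))
  simp only [innerSL_apply_apply, inner_smul_right, orthonormal_iff_ite.1 e.orthonormal,
    mul_ite, mul_one, mul_zero] at this
  rw [e.repr_apply_apply]
  refine this.unique ((hasSum_ite_eq n (b n)).congr_fun fun k => ?_)
  rcases eq_or_ne k n with rfl | hk
  · simp
  · simp [hk, hk.symm]

lemma repr_eq_casesOn_of_hasSum_succ {b : ℕ → ℂ} {y : H}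
    (hy : HasSum (fun k => b k • e (k + 1)) y) (n : ℕ) :
    e.repr y n = Nat.casesOn n 0 b := by
  refine repr_eq_of_hasSum ((hasSum_nat_add_iff' 1).1 ?_) n
  simpa using hy

lemma eq_of_repr_eq {x y : H} (h : ∀ n, e.repr x n = e.repr y n) : x = y :=
  e.repr.injective (lp.ext (funext h))

lemma continuous_repr_apply (n : ℕ) : Continuous fun y : H => e.repr y n := by
  simp_rw [e.repr_apply_apply]
  exact continuous_const.inner continuous_id

lemma norm_repr_apply_le (y : H) (n : ℕ) : ‖e.repr y n‖ ≤ ‖y‖ :=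
  (lp.norm_apply_le_norm two_ne_zero _ n).trans_eq (e.repr.norm_map y)

variable (hS : ∀ n, S (e n) = (ω n : ℂ) • e (n + 1))
include hS

lemma repr_apply_eq_casesOn (y : H) (n : ℕ) :
    e.repr (S y) n = Nat.casesOn n 0 fun k => ω k * e.repr y k := by
  refine repr_eq_casesOn_of_hasSum_succ (((e.hasSum_repr y).mapL S).congr_fun fun k => ?_) n
  rw [ContinuousLinearMap.map_smul, hS, smul_smul, mul_comm]

lemma repr_sub_smul_apply_zero (z : ℂ) (y : H) :
    e.repr ((S - z • (1 : H →L[ℂ] H)) y) 0 = -z * e.repr y 0 := by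
  have := repr_apply_eq_casesOn hS y 0
  simp only [sub_apply, map_sub, lp.coeFn_sub, Pi.sub_apply, this]
  simp

lemma repr_sub_smul_apply_succ (z : ℂ) (y : H) (n : ℕ) :
    e.repr ((S - z • (1 : H →L[ℂ] H)) y) (n + 1) = ω n * e.repr y n - z * e.repr y (n + 1) := by
  have := repr_apply_eq_casesOn hS y (n + 1)
  simp only [sub_apply, map_sub, lp.coeFn_sub, Pi.sub_apply, this]
  simp

lemma sub_smul_apply_eq_iff (hpos : ∀ n, 0 < ω n) {z : ℂ} (hz : z ≠ 0) {x y : H} :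
    (S - z • (1 : H →L[ℂ] H)) y = x ↔
      ∀ n, e.repr y n = resolventCoeff ω (fun n => e.repr x n) z n := by
  constructor
  · rintro rfl
    exact eq_resolventCoeff_of_recursion hpos hz (repr_sub_smul_apply_zero hS z y).symm
      fun n => (repr_sub_smul_apply_succ hS z y n).symm
  · intro h
    refine eq_of_repr_eq (e := e) fun n => ?_
    cases n with
    | zero => rw [repr_sub_smul_apply_zero hS, h, neg_mul_resolventCoeff_zero hpos hz]
    | succ n => rw [repr_sub_smul_apply_succ hS, h, h, resolventCoeff_recursion hpos hz]

lemma eventually_weightProd_le_of_apply_eq (hpos : ∀ n, 0 < ω n) {z : ℂ} (hz : z ≠ 0) {x y : H}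
    (hy : (S - z • (1 : H →L[ℂ] H)) y = x) {F : ℂ}
    (hF : HasSum (fun j => symbolCoeff ω (fun n => e.repr x n) j * z ^ j) F) (hF0 : F ≠ 0)
    {s : ℝ} (hzs : ‖z‖ < s) :
    ∀ᶠ N in atTop, weightProd ω N ≤ s ^ N := by
  set P : ℕ → ℂ := fun N =>
    ∑ j ∈ Finset.range (N + 1), symbolCoeff ω (fun n => e.repr x n) j * z ^ j
  have hFpos : 0 < ‖F‖ := norm_pos_iff.2 hF0
  have hP : ∀ᶠ N in atTop, ‖F‖ / 2 < ‖P N‖ :=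
    (hF.tendsto_sum_nat.comp (tendsto_add_atTop_nat 1)).norm.eventually_const_lt
      (half_lt_self hFpos)
  filter_upwards [hP, eventually_mul_pow_le_pow (2 * ‖y‖ * ‖z‖ / ‖F‖) (norm_nonneg z) hzs]
    with N hPN hKN
  have hcoord : weightProd ω N * ‖P N‖ = ‖z‖ ^ (N + 1) * ‖e.repr y N‖ := by
    rw [(sub_smul_apply_eq_iff hS hpos hz).1 hy N, resolventCoeff, norm_div, norm_mul, norm_neg,
      norm_pow, Complex.norm_real, Real.norm_of_nonneg (weightProd_pos hpos N).le]
    field_simp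
    rfl
  have hβ : weightProd ω N * (‖F‖ / 2) ≤ ‖z‖ ^ (N + 1) * ‖y‖ :=
    calc weightProd ω N * (‖F‖ / 2) ≤ weightProd ω N * ‖P N‖ :=
          mul_le_mul_of_nonneg_left hPN.le (weightProd_pos hpos N).le
      _ = ‖z‖ ^ (N + 1) * ‖e.repr y N‖ := hcoord
      _ ≤ ‖z‖ ^ (N + 1) * ‖y‖ := by gcongr; exact norm_repr_apply_le y N
  calc weightProd ω N ≤ 2 * ‖y‖ * ‖z‖ / ‖F‖ * ‖z‖ ^ N := by
        rw [div_mul_eq_mul_div, le_div_iff₀ hFpos]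
        linarith [show ‖z‖ ^ (N + 1) * ‖y‖ = ‖y‖ * ‖z‖ * ‖z‖ ^ N by ring]
    _ ≤ s ^ N := hKN

lemma notMem_localResolventSet_of_le (hpos : ∀ n, 0 < ω n) {x : H} (hx : x ≠ 0) {μ : ℂ}
    (hμ0 : μ ≠ 0) (hμβ : ‖μ‖ ≤ atTop.limsup fun n : ℕ => weightProd ω n ^ (n : ℝ)⁻¹)
    (hμR : ENNReal.ofReal ‖μ‖ ≤
      (FormalMultilinearSeries.ofScalars ℂ (symbolCoeff ω fun n => e.repr x n)).radius) :
    μ ∉ localResolventSet S x := by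
  rintro ⟨U, hUo, hμU, f, -, hf⟩
  set c := symbolCoeff ω fun n => e.repr x n
  have hc : c ≠ 0 := fun hc =>
    hx (eq_of_repr_eq (e := e) fun n => by
      simpa [c, symbolCoeff, (weightProd_pos hpos n).ne'] using congr_fun hc n)
  have hμV : μ ∈ closure (Metric.ball 0 ‖μ‖ ∩ {0}ᶜ) := by
    rw [Set.inter_comm]
    refine isOpen_compl_singleton.inter_closure ⟨hμ0, ?_⟩
    rw [closure_ball 0 (norm_ne_zero_iff.2 hμ0)]
    simp
  have hVR : U ∩ (Metric.ball 0 ‖μ‖ ∩ {0}ᶜ) ⊆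
      Metric.eball 0 (FormalMultilinearSeries.ofScalars ℂ c).radius := fun z hz => by
    rw [Metric.mem_eball, edist_zero_right, ← ofReal_norm]
    exact ((ENNReal.ofReal_lt_ofReal_iff (norm_pos_iff.2 hμ0)).2
      (mem_ball_zero_iff.1 hz.2.1)).trans_le hμR
  obtain ⟨z, ⟨hzU, hzμ, hz0⟩, F, hF0, hF⟩ := exists_hasSum_ne_zero_of_isOpen hc
    (hUo.inter (Metric.isOpen_ball.inter isOpen_compl_singleton))
    (mem_closure_iff_nhds.1 hμV U (hUo.mem_nhds hμU)) hVR
  obtain ⟨s, hzs, hsμ⟩ := exists_between (mem_ball_zero_iff.1 hzμ)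
  obtain ⟨N, hlt, hle⟩ := ((frequently_pow_lt_of_lt_limsup_root
    (fun n => (weightProd_pos hpos n).le) ((norm_nonneg z).trans hzs.le)
    (hsμ.trans_le hμβ)).and_eventually
    (eventually_weightProd_le_of_apply_eq hS hpos hz0 (hf z hzU) hF hF0 hzs)).exists
  exact hlt.not_ge hle

lemma zero_notMem_localResolventSet (hpos : ∀ n, 0 < ω n) {x : H} (hx : x ≠ 0) :
    (0 : ℂ) ∉ localResolventSet S x := by
  rintro ⟨U, hUo, h0U, f, hf, hfx⟩
  refine hx (eq_of_repr_eq (e := e) fun N => ?_)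
  induction N using Nat.strong_induction_on with
  | _ N ih =>
    have hev : (fun _ => e.repr x N) =ᶠ[𝓝[≠] 0] fun z => -z * e.repr (f z) N := by
      filter_upwards [nhdsWithin_le_nhds (hUo.mem_nhds h0U), self_mem_nhdsWithin] with z hzU hz0
      rw [(sub_smul_apply_eq_iff hS hpos hz0).1 (hfx z hzU) N,
        resolventCoeff_of_forall_lt_eq_zero hpos hz0 fun j hj => by simpa using ih j hj]
      field_simp [show z ≠ 0 from hz0]
    have hcont : ContinuousAt (fun z => -z * e.repr (f z) N) 0 :=
      continuousAt_id.neg.mul ((continuous_repr_apply N).continuousAt.comp (hf 0 h0U).continuousAt)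
    have hlim : Tendsto (fun z => -z * e.repr (f z) N) (𝓝[≠] 0) (𝓝 0) := by
      simpa using hcont.tendsto.mono_left nhdsWithin_le_nhds
    simpa using tendsto_nhds_unique (tendsto_const_nhds.congr' hev) hlim

lemma mem_localResolventSet_of_lt [CompleteSpace H] (hpos : ∀ n, 0 < ω n) {x : H} {r s : ℝ}
    (hs : 0 ≤ s) (hsr : s < r) (hβ : ∀ᶠ N in atTop, weightProd ω N ≤ s ^ N)
    (hR : ENNReal.ofReal r <
      (FormalMultilinearSeries.ofScalars ℂ (symbolCoeff ω fun n => e.repr x n)).radius)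
    {μ : ℂ} (hμ : r < ‖μ‖) :
    μ ∈ localResolventSet S x := by
  have hr : 0 < r := hs.trans_lt hsr
  obtain ⟨C, hC0, hC⟩ := FormalMultilinearSeries.norm_mul_pow_le_of_lt_radius _ hR
  simp only [FormalMultilinearSeries.ofScalars_norm, Real.coe_toNNReal _ hr.le] at hC
  set b : ℕ → ℂ → ℂ := fun N z => resolventCoeff ω (fun n => e.repr x n) z N
  set U : Set ℂ := {z | r < ‖z‖}
  have hUo : IsOpen U := isOpen_lt continuous_const continuous_norm
  have hU0 : U ⊆ {0}ᶜ := fun z hz => norm_pos_iff.1 (hr.trans hz)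
  have hbound : ∀ N, ∀ z ∈ U, ‖b N z • e N‖ ≤ C * (N + 1) * weightProd ω N / r ^ (N + 1) :=
    fun N z hz => by
      rw [norm_smul, e.orthonormal.1 N, mul_one]
      exact norm_resolventCoeff_le hpos hr hC hz.le N
  have hsum := summable_mul_div_pow_of_eventually_le_pow (fun n => (weightProd_pos hpos n).le)
    hs hsr hβ hC0.le
  refine ⟨U, hUo, hμ, fun z => ∑' N, b N z • e N, ?_, fun z hz => ?_⟩
  · exact (Complex.differentiableOn_tsum_of_summable_norm hsum
      (fun N => ((differentiableOn_resolventCoeff N).mono hU0).smul_const (e N)) hUo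
      hbound).analyticOnNhd hUo
  · rw [sub_smul_apply_eq_iff hS hpos (hU0 hz)]
    exact repr_eq_of_hasSum (Summable.of_norm_bounded hsum fun N => hbound N z hz).hasSum

lemma mem_localResolventSet_of_limsup_lt [CompleteSpace H] (hpos : ∀ n, 0 < ω n) {M : ℝ}
    (hbd : ∀ n, ω n ≤ M) {x : H}
    (hgap : ENNReal.ofReal (atTop.limsup fun n : ℕ => weightProd ω n ^ (n : ℝ)⁻¹) <
      (FormalMultilinearSeries.ofScalars ℂ (symbolCoeff ω fun n => e.repr x n)).radius)
    {μ : ℂ} (hμ : (atTop.limsup fun n : ℕ => weightProd ω n ^ (n : ℝ)⁻¹) < ‖μ‖) :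
    μ ∈ localResolventSet S x := by
  set r₃ := atTop.limsup fun n : ℕ => weightProd ω n ^ (n : ℝ)⁻¹
  have hβ0 : ∀ n, 0 ≤ weightProd ω n := fun n => (weightProd_pos hpos n).le
  have hbdd := isBoundedUnder_root_weightProd hpos hbd
  have hr₃0 : 0 ≤ r₃ := limsup_root_nonneg hβ0 hbdd
  obtain ⟨r, -, hr₃r, hr⟩ := ENNReal.lt_iff_exists_real_btwn.1
    (lt_min hgap ((ENNReal.ofReal_lt_ofReal_iff (hr₃0.trans_lt hμ)).2 hμ))
  obtain ⟨s, hr₃s, hsr⟩ := exists_between (ENNReal.ofReal_lt_ofReal_iff'.1 hr₃r).1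
  exact mem_localResolventSet_of_lt hS hpos (hr₃0.trans hr₃s.le) hsr
    (eventually_le_pow_of_limsup_root_lt hβ0 hbdd hr₃s) (hr.trans_le (min_le_left _ _))
    (ENNReal.ofReal_lt_ofReal_iff'.1 (hr.trans_le (min_le_right _ _))).1

lemma mem_localSpectrum_of_le (hpos : ∀ n, 0 < ω n) {x : H} (hx : x ≠ 0) {μ : ℂ}
    (hμβ : ENNReal.ofReal ‖μ‖ ≤
      ENNReal.ofReal (atTop.limsup fun n : ℕ => weightProd ω n ^ (n : ℝ)⁻¹))
    (hμR : ENNReal.ofReal ‖μ‖ ≤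
      (FormalMultilinearSeries.ofScalars ℂ (symbolCoeff ω fun n => e.repr x n)).radius) :
    μ ∈ localSpectrum S x := by
  rcases eq_or_ne μ 0 with rfl | hμ0
  · exact zero_notMem_localResolventSet hS hpos hx
  · exact notMem_localResolventSet_of_le hS hpos hx hμ0
      ((ENNReal.ofReal_le_ofReal_iff'.1 hμβ).resolve_right (norm_pos_iff.2 hμ0).not_ge) hμR

end Shift

end WeightedShift

variable {H : Type*} [NormedAddCommGroup H] [InnerProductSpace ℂ H] [CompleteSpace H]

open WeightedShift in
/-- Description of the local spectra of a unilateral weighted shift `S`.  With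
`β n = ω 0 ⋯ ω (n-1)`, `r₃(S) = limsup (β n)^(1/n)` and, for `x = Σ a n • e n ≠ 0`,
`R_ω(x) = liminf |β n / a n|^(1/n)` (valued in `ℝ≥0∞`, with `β n / 0 = ∞`):
if `r₃(S) < R_ω(x)` then `σ_S(x)` is the closed disc of radius `r₃(S)`;
if `r₃(S) ≥ R_ω(x)` then the closed disc of radius `R_ω(x)` is contained in `σ_S(x)`. -/
theorem localSpectrum_weighted_shift (S : H →L[ℂ] H)
    (e : HilbertBasis ℕ ℂ H) (ω : ℕ → ℝ) (hpos : ∀ n, 0 < ω n)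
    (hbd : ∃ M : ℝ, ∀ n, ω n ≤ M)
    (hS : ∀ n, S (e n) = (ω n : ℂ) • e (n + 1))
    (x : H) (hx : x ≠ 0)
    (r₃ : ℝ) (hr₃ : r₃ = atTop.limsup fun n : ℕ => (∏ i ∈ Finset.range n, ω i) ^ ((n : ℝ)⁻¹))
    (Rω : ℝ≥0∞)
    (hRω : Rω = atTop.liminf fun n : ℕ =>
      (ENNReal.ofReal (∏ i ∈ Finset.range n, ω i) / ENNReal.ofReal ‖e.repr x n‖) ^ ((n : ℝ)⁻¹)) :
    (ENNReal.ofReal r₃ < Rω → localSpectrum S x = Metric.closedBall (0 : ℂ) r₃) ∧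
    (Rω ≤ ENNReal.ofReal r₃ →
      ∀ μ : ℂ, ENNReal.ofReal ‖μ‖ ≤ Rω → μ ∈ localSpectrum S x) := by
  obtain ⟨M, hbd⟩ := hbd
  have hRω' :
      Rω = (FormalMultilinearSeries.ofScalars ℂ (symbolCoeff ω fun n => e.repr x n)).radius :=
    hRω.trans (radius_ofScalars_div_eq_liminf (fun n => e.repr x n) (weightProd_pos hpos)).symm
  subst hr₃ hRω'
  refine ⟨fun hlt => Set.ext fun μ => ⟨fun hμ => ?_, fun hμ => ?_⟩, fun hle μ hμ => ?_⟩
  · rw [mem_closedBall_zero_iff]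
    by_contra! h
    exact hμ (mem_localResolventSet_of_limsup_lt hS hpos hbd hlt h)
  · have hμ' := ENNReal.ofReal_le_ofReal (mem_closedBall_zero_iff.1 hμ)
    exact mem_localSpectrum_of_le hS hpos hx hμ' (hμ'.trans hlt.le)
  · exact mem_localSpectrum_of_le hS hpos hx (hμ.trans hle) hμ
end

section
/- Let S be a bilateral weighted shift with positive bounded weights. For every non-zero x ∈ H, the open annulus {λ ∈ ℂ : r₃⁻(S) < |λ| < r₂⁺(S)} is contained in σ_S(x), where r₃⁻(S) = limsup (1/β_{−n})^{1/n} and r₂⁺(S) = liminf β_n^{1/n}. -/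
open Filter

variable {H : Type*} [NormedAddCommGroup H] [InnerProductSpace ℂ H] [CompleteSpace H]

/-!
Pair `x` against `k(λ) = ∑ₙ (λⁿ / βₙ) eₙ`: the root test makes `g z = ∑ₙ ⟪eₙ, x⟫ zⁿ / βₙ`
converge on the annulus, and since `(S - z)* k(z̄) = 0` (the relation `βₙ = βₙ₋₁ ωₙ₋₁` makes the
series telescope), `g z = 0` whenever `x ∈ range (S - z)`. A local resolvent at `μ` thus makes `g`
vanish near `μ`, hence on the connected annulus; circle integrals then show that every Laurent
coefficient `⟪eₙ, x⟫ / βₙ` vanishes, so `x = 0`.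
-/

open Set Metric Topology
open scoped InnerProductSpace

def annulus (r R : ℝ) : Set ℂ := (‖·‖) ⁻¹' Ioo r R

theorem isOpen_annulus (r R : ℝ) : IsOpen (annulus r R) :=
  isOpen_Ioo.preimage continuous_norm

theorem ne_zero_of_mem_annulus {r R : ℝ} {z : ℂ} (hr : 0 ≤ r) (hz : z ∈ annulus r R) :
    z ≠ 0 :=
  norm_pos_iff.mp (hr.trans_lt hz.1)

theorem isPreconnected_annulus {r R : ℝ} (hr : 0 ≤ r) : IsPreconnected (annulus r R) := by
  have hpolar : annulus r R =
      (fun p : ℝ × ℝ => (p.1 : ℂ) * Complex.exp (p.2 * Complex.I)) '' (Ioo r R ×ˢ univ) := by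
    ext z
    constructor
    · intro hz
      exact ⟨(‖z‖, z.arg), ⟨hz, trivial⟩, Complex.norm_mul_exp_arg_mul_I z⟩
    · rintro ⟨⟨s, θ⟩, ⟨hs, -⟩, rfl⟩
      simpa [annulus, Complex.norm_exp_ofReal_mul_I, abs_of_pos (hr.trans_lt hs.1)] using hs
  rw [hpolar]
  exact (isPreconnected_Ioo.prod isPreconnected_univ).image _ (by fun_prop)

theorem zpow_le_zpow_add_zpow {a s b : ℝ} (ha : 0 < a) (has : a ≤ s) (hsb : s ≤ b) (n : ℤ) :
    s ^ n ≤ a ^ n + b ^ n := by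
  rcases le_or_gt 0 n with hn | hn
  · linarith [zpow_le_zpow_left₀ hn (ha.le.trans has) hsb, zpow_pos ha n]
  · have h : s⁻¹ ^ (-n) ≤ a⁻¹ ^ (-n) :=
      zpow_le_zpow_left₀ (by omega) (inv_nonneg.mpr (ha.le.trans has)) (inv_anti₀ ha has)
    rw [inv_zpow', inv_zpow', neg_neg] at h
    linarith [zpow_pos (ha.trans_le (has.trans hsb)) n]

theorem differentiableOn_tsum_zpow {d : ℤ → ℂ} {r R : ℝ} (hr : 0 ≤ r)
    (hd : ∀ s ∈ Ioo r R, Summable fun n => ‖d n‖ * s ^ n) :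
    DifferentiableOn ℂ (fun z => ∑' n, d n * z ^ n) (annulus r R) := by
  intro z hz
  obtain ⟨a, hra, haz⟩ := exists_between hz.1
  obtain ⟨b, hzb, hbR⟩ := exists_between hz.2
  have ha : 0 < a := hr.trans_lt hra
  refine (DifferentiableOn.differentiableAt ?_
    ((isOpen_annulus a b).mem_nhds ⟨haz, hzb⟩)).differentiableWithinAt
  refine Complex.differentiableOn_tsum_of_summable_norm
    ((hd a ⟨hra, haz.trans (hzb.trans hbR)⟩).add (hd b ⟨hra.trans (haz.trans hzb), hbR⟩))
    (fun n => ?_) (isOpen_annulus a b) (fun n w hw => ?_)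
  · exact DifferentiableOn.const_mul (fun w hw => (differentiableAt_zpow.mpr
      (Or.inl (ne_zero_of_mem_annulus ha.le hw))).differentiableWithinAt) _
  · rw [norm_mul, norm_zpow, ← mul_add]
    exact mul_le_mul_of_nonneg_left (zpow_le_zpow_add_zpow ha hw.1.le hw.2.le n) (norm_nonneg _)

theorem hasSum_circleIntegral_of_norm_le {ι E : Type*} [Countable ι] [NormedAddCommGroup E]
    [NormedSpace ℂ E] [CompleteSpace E] {f : ι → ℂ → E} {c : ℂ} {R : ℝ} {u : ι → ℝ}
    (hf : ∀ i, ContinuousOn (f i) (sphere c |R|)) (hu : Summable u)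
    (hle : ∀ i, ∀ z ∈ sphere c |R|, ‖f i z‖ ≤ u i) :
    HasSum (fun i => ∮ z in C(c, R), f i z) (∮ z in C(c, R), ∑' i, f i z) := by
  refine intervalIntegral.hasSum_integral_of_dominated_convergence (fun i _ => |R| * u i)
    (fun i => ?_) (fun i => ?_) ?_ intervalIntegrable_const ?_
  · simp only [deriv_circleMap]
    exact (((continuous_circleMap 0 R).mul continuous_const).smul
      ((hf i).comp_continuous (continuous_circleMap c R)
        (circleMap_mem_sphere' c R))).aestronglyMeasurable
  · refine .of_forall fun θ _ => ?_
    rw [norm_smul, deriv_circleMap, norm_mul, norm_circleMap_zero, Complex.norm_I, mul_one]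
    exact mul_le_mul_of_nonneg_left (hle i _ (circleMap_mem_sphere' c R θ)) (abs_nonneg R)
  · exact .of_forall fun _ _ => hu.mul_left _
  · refine .of_forall fun θ _ => ?_
    exact ((hu.of_norm_bounded (hle · _ (circleMap_mem_sphere' c R θ))).hasSum).const_smul _

theorem eq_zero_of_tsum_mul_zpow_eq_zero_on_sphere {d : ℤ → ℂ} {ρ : ℝ} (hρ : 0 < ρ)
    (hd : Summable fun n => ‖d n‖ * ρ ^ n)
    (h : ∀ z ∈ sphere (0 : ℂ) ρ, ∑' n, d n * z ^ n = 0) (m : ℤ) : d m = 0 := by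
  rw [← abs_of_pos hρ] at hd h
  have hz0 : ∀ z ∈ sphere (0 : ℂ) |ρ|, z ≠ 0 := fun z hz =>
    ne_zero_of_mem_sphere (abs_pos.mpr hρ.ne').ne' ⟨z, hz⟩
  have hzpow : ∀ n : ℤ, ∀ z ∈ sphere (0 : ℂ) |ρ|, z ^ (n - m - 1) = z ^ n * z ^ (-m - 1) :=
    fun n z hz => by rw [← zpow_add₀ (hz0 z hz)]; ring_nf
  have hsum := hasSum_circleIntegral_of_norm_le (c := 0) (R := ρ)
    (f := fun n z => d n * z ^ (n - m - 1)) (u := fun n => ‖d n‖ * |ρ| ^ n * |ρ| ^ (-m - 1))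
    (fun n z hz => ((continuousAt_zpow₀ _ _ (.inl (hz0 z hz))).const_mul _).continuousWithinAt)
    (hd.mul_right _) (fun n z hz => by
      rw [hzpow n z hz, norm_mul, norm_mul, norm_zpow, norm_zpow,
        mem_sphere_zero_iff_norm.mp hz, mul_assoc])
  have hterm : ∀ n, (∮ z in C(0, ρ), d n * z ^ (n - m - 1)) =
      if n = m then 2 * Real.pi * Complex.I * d m else 0 := by
    intro n
    rw [circleIntegral.integral_const_mul]
    split_ifs with hnm
    · subst hnm
      have h2πI := circleIntegral.integral_sub_inv_of_mem_ball (c := 0) (mem_ball_self hρ)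
      simp only [sub_zero] at h2πI
      simp only [show n - n - 1 = -1 by ring, zpow_neg_one, h2πI, mul_comm]
    · have hvanish := circleIntegral.integral_sub_zpow_of_ne (n := n - m - 1) (by omega) 0 0 ρ
      simp only [sub_zero] at hvanish
      rw [hvanish, mul_zero]
  have hzero : (∮ z in C(0, ρ), ∑' n, d n * z ^ (n - m - 1)) = 0 := by
    rw [circleIntegral.integral_congr hρ.le (g := 0)]
    · simp [circleIntegral]
    · intro z hz
      rw [← abs_of_pos hρ] at hz
      simp only [hzpow _ z hz, ← mul_assoc, tsum_mul_right, h z hz, zero_mul, Pi.zero_apply]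
  simp only [hterm, hzero] at hsum
  simpa [Real.pi_ne_zero, Complex.I_ne_zero] using hsum.unique (hasSum_ite_eq m _)

theorem eq_zero_of_tsum_mul_zpow_eventually_eq_zero {d : ℤ → ℂ} {r R : ℝ} {μ : ℂ} (hr : 0 ≤ r)
    (hd : ∀ s ∈ Ioo r R, Summable fun n => ‖d n‖ * s ^ n) (hμ : μ ∈ annulus r R)
    (h : ∀ᶠ z in 𝓝 μ, ∑' n, d n * z ^ n = 0) : d = 0 := by
  have hanalytic := (differentiableOn_tsum_zpow hr hd).analyticOnNhd (isOpen_annulus r R)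
  have hzero : EqOn (fun z => ∑' n, d n * z ^ n) 0 (annulus r R) :=
    hanalytic.eqOn_zero_of_preconnected_of_eventuallyEq_zero (isPreconnected_annulus hr) hμ h
  funext m
  refine eq_zero_of_tsum_mul_zpow_eq_zero_on_sphere (hr.trans_lt hμ.1) (hd _ hμ)
    (fun z hz => hzero ?_) m
  rw [annulus, mem_preimage, mem_sphere_zero_iff_norm.mp hz]
  exact hμ

section RootTest

open Finset

theorem summable_pow_div_of_lt_liminf_root {P : ℕ → ℝ} (hP : ∀ n, 0 < P n) {s : ℝ} (hs : 0 ≤ s)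
    (h : s < liminf (fun n : ℕ => P n ^ ((n : ℝ)⁻¹)) atTop) :
    Summable fun n : ℕ => s ^ n / P n := by
  obtain ⟨t, hst, ht⟩ := exists_between h
  have ht0 : 0 < t := hs.trans_lt hst
  refine Summable.of_norm_bounded_eventually_nat
    (summable_geometric_of_lt_one (div_nonneg hs ht0.le) ((div_lt_one ht0).mpr hst)) ?_
  have hbdd : IsBoundedUnder (· ≥ ·) atTop fun n : ℕ => P n ^ ((n : ℝ)⁻¹) :=
    isBoundedUnder_of ⟨0, fun n => Real.rpow_nonneg (hP n).le _⟩
  filter_upwards [eventually_lt_of_lt_liminf ht hbdd, eventually_gt_atTop 0] with n hn hn0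
  rw [Real.lt_rpow_inv_iff_of_pos ht0.le (hP n).le (by positivity), Real.rpow_natCast] at hn
  rw [norm_div, norm_pow, Real.norm_of_nonneg hs, Real.norm_of_nonneg (hP n).le, div_pow]
  gcongr

theorem summable_div_pow_of_limsup_root_lt {Q : ℕ → ℝ} (hQ : ∀ n, 0 ≤ Q n) {s : ℝ} (hs : 0 < s)
    (hbdd : IsBoundedUnder (· ≤ ·) atTop fun n : ℕ => Q n ^ ((n : ℝ)⁻¹))
    (h : limsup (fun n : ℕ => Q n ^ ((n : ℝ)⁻¹)) atTop < s) :
    Summable fun n : ℕ => Q n / s ^ n := by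
  obtain ⟨t, ht, hts⟩ := exists_between (max_lt h hs)
  have ht0 : 0 < t := (le_max_right _ _).trans_lt ht
  refine Summable.of_norm_bounded_eventually_nat
    (summable_geometric_of_lt_one (div_nonneg ht0.le hs.le) ((div_lt_one hs).mpr hts)) ?_
  filter_upwards [eventually_lt_of_limsup_lt ((le_max_left _ _).trans_lt ht) hbdd,
    eventually_gt_atTop 0] with n hn hn0
  rw [Real.rpow_inv_lt_iff_of_pos (hQ n) ht0.le (by positivity), Real.rpow_natCast] at hn
  rw [norm_div, norm_pow, Real.norm_of_nonneg hs.le, Real.norm_of_nonneg (hQ n), div_pow]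
  gcongr

theorem isBoundedUnder_prod_range_rpow_inv {a : ℕ → ℝ} {C : ℝ} (ha : ∀ i, 0 ≤ a i)
    (hC : ∀ i, a i ≤ C) :
    IsBoundedUnder (· ≤ ·) atTop fun n : ℕ => (∏ i ∈ range n, a i) ^ ((n : ℝ)⁻¹) := by
  refine isBoundedUnder_of_eventually_le (a := C) ?_
  filter_upwards [eventually_gt_atTop 0] with n hn
  rw [Real.rpow_inv_le_iff_of_pos (prod_nonneg fun i _ => ha i) ((ha 0).trans (hC 0))
    (by positivity), Real.rpow_natCast]
  simpa using prod_le_prod (fun i _ => ha i) (fun i _ => hC i) (s := range n)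

end RootTest

-- The paper's `βₙ`: `ω₀ ⋯ ωₙ₋₁` for `n ≥ 0` and `(ωₙ ⋯ ω₋₁)⁻¹` for `n < 0`.
open Finset in
noncomputable def weightProduct (ω : ℤ → ℝ) : ℤ → ℝ
  | .ofNat n => ∏ i ∈ range n, ω i
  | .negSucc n => (∏ i ∈ range (n + 1), ω (-(i : ℤ) - 1))⁻¹

section weightProduct

open Finset

variable {ω : ℤ → ℝ}

theorem weightProduct_natCast (n : ℕ) : weightProduct ω n = ∏ i ∈ range n, ω i := rfl

theorem weightProduct_neg_natCast (n : ℕ) :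
    weightProduct ω (-n) = (∏ i ∈ range n, ω (-(i : ℤ) - 1))⁻¹ := by
  cases n with
  | zero => simpa using weightProduct_natCast (ω := ω) 0
  | succ n => rfl

theorem weightProduct_pos (hpos : ∀ n, 0 < ω n) (n : ℤ) : 0 < weightProduct ω n := by
  cases n with
  | ofNat n => exact prod_pos fun i _ => hpos _
  | negSucc n => exact inv_pos.mpr (prod_pos fun i _ => hpos _)

theorem weightProduct_add_one (hω : ∀ n, ω n ≠ 0) (n : ℤ) :
    weightProduct ω (n + 1) = weightProduct ω n * ω n := by
  rcases n with n | _ | n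
  · exact prod_range_succ _ n
  · simp [weightProduct, hω]
  · show (∏ i ∈ range (n + 1), ω (-(i : ℤ) - 1))⁻¹ =
      (∏ i ∈ range (n + 2), ω (-(i : ℤ) - 1))⁻¹ * ω (Int.negSucc (n + 1))
    rw [prod_range_succ _ (n + 1), mul_inv, mul_assoc, Int.negSucc_eq]
    push_cast
    rw [show -((n : ℤ) + 1) - 1 = -((n : ℤ) + 1 + 1) by ring, inv_mul_cancel₀ (hω _), mul_one]

theorem summable_inv_weightProduct_mul_zpow (hpos : ∀ n, 0 < ω n) {s : ℝ} (hs : 0 < s)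
    (hbdd : IsBoundedUnder (· ≤ ·) atTop
      fun n : ℕ => (∏ i ∈ range n, ω (-(i : ℤ) - 1)) ^ ((n : ℝ)⁻¹))
    (h₁ : limsup (fun n : ℕ => (∏ i ∈ range n, ω (-(i : ℤ) - 1)) ^ ((n : ℝ)⁻¹)) atTop < s)
    (h₂ : s < liminf (fun n : ℕ => (∏ i ∈ range n, ω i) ^ ((n : ℝ)⁻¹)) atTop) :
    Summable fun n : ℤ => (weightProduct ω n)⁻¹ * s ^ n := by
  rw [summable_int_iff_summable_nat_and_neg]
  constructor
  · simpa [weightProduct_natCast, div_eq_inv_mul] using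
      summable_pow_div_of_lt_liminf_root (fun n => prod_pos fun i _ => hpos _) hs.le h₂
  · simpa [weightProduct_neg_natCast, div_eq_mul_inv] using
      summable_div_pow_of_limsup_root_lt (fun n => prod_nonneg fun i _ => (hpos _).le) hs hbdd h₁

end weightProduct

section WeightedShift

variable {E : Type*} [NormedAddCommGroup E] [InnerProductSpace ℂ E] (e : HilbertBasis ℤ ℂ E)
  {ω : ℤ → ℝ} {S : E →L[ℂ] E}

theorem weight_le_opNorm (hS : ∀ n, S (e n) = (ω n : ℂ) • e (n + 1)) (n : ℤ) : ω n ≤ ‖S‖ :=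
  calc ω n ≤ ‖(ω n : ℂ) • e (n + 1)‖ := by
        rw [norm_smul, e.orthonormal.1, mul_one, Complex.norm_real]; exact le_abs_self _
    _ = ‖S (e n)‖ := by rw [hS]
    _ ≤ ‖S‖ := by simpa [e.orthonormal.1 n] using S.le_opNorm (e n)

theorem inner_weightedShift_apply (hS : ∀ n, S (e n) = (ω n : ℂ) • e (n + 1)) (n : ℤ) (y : E) :
    ⟪e n, S y⟫_ℂ = ω (n - 1) * ⟪e (n - 1), y⟫_ℂ := by
  have h : (innerSL ℂ (e n)).comp S = (ω (n - 1) : ℂ) • innerSL ℂ (e (n - 1)) := by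
    refine ContinuousLinearMap.ext_on
      (Submodule.dense_iff_topologicalClosure_eq_top.mpr e.dense_span) ?_
    rintro _ ⟨k, rfl⟩
    simp only [ContinuousLinearMap.comp_apply, innerSL_apply_apply, hS, inner_smul_right,
      smul_apply, smul_eq_mul, orthonormal_iff_ite.mp e.orthonormal]
    by_cases hk : k = n - 1
    · subst hk
      simp
    · rw [if_neg (by omega), if_neg (Ne.symm hk), mul_zero, mul_zero]
  simpa using congr($h y)

theorem summable_norm_inv_weightProduct_mul_inner_mul_zpow (hpos : ∀ n, 0 < ω n) {s : ℝ}
    (hs : 0 ≤ s) (hsum : Summable fun n => (weightProduct ω n)⁻¹ * s ^ n) (y : E) :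
    Summable fun n => ‖(weightProduct ω n : ℂ)⁻¹ * ⟪e n, y⟫_ℂ‖ * s ^ n := by
  refine Summable.of_nonneg_of_le (fun n => by positivity) (fun n => ?_) (hsum.mul_left ‖y‖)
  have hβ := weightProduct_pos hpos n
  rw [norm_mul, norm_inv, Complex.norm_real, Real.norm_of_nonneg hβ.le]
  calc _ ≤ (weightProduct ω n)⁻¹ * ‖y‖ * s ^ n := by
        gcongr
        simpa [e.orthonormal.1 n] using norm_inner_le_norm (𝕜 := ℂ) (e n) y
    _ = _ := by ring

theorem tsum_inv_weightProduct_mul_inner_sub_smul_mul_zpow (hpos : ∀ n, 0 < ω n)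
    (hS : ∀ n, S (e n) = (ω n : ℂ) • e (n + 1)) {z : ℂ} (hz : z ≠ 0)
    (hsum : Summable fun n => (weightProduct ω n)⁻¹ * ‖z‖ ^ n) (y : E) :
    ∑' n, (weightProduct ω n : ℂ)⁻¹ * ⟪e n, (S - z • 1) y⟫_ℂ * z ^ n = 0 := by
  set a : ℤ → ℂ := fun n => (weightProduct ω n : ℂ)⁻¹ * ⟪e n, y⟫_ℂ * z ^ n * z
  -- `βₙ = βₙ₋₁ ωₙ₋₁` absorbs the weight brought in by the shift, so the series telescopes.
  have hterm : ∀ n, (weightProduct ω n : ℂ)⁻¹ * ⟪e n, (S - z • 1) y⟫_ℂ * z ^ n =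
      a (n - 1) - a n := by
    intro n
    have hβ := weightProduct_add_one (fun k => (hpos k).ne') (n - 1)
    rw [sub_add_cancel] at hβ
    have hβ0 := (weightProduct_pos hpos (n - 1)).ne'
    simp only [a, sub_apply, smul_apply, one_apply_eq_self, inner_sub_right, inner_smul_right,
      inner_weightedShift_apply e hS, hβ, zpow_sub_one₀ hz]
    push_cast
    field_simp [(hpos (n - 1)).ne', hβ0]
  have ha : Summable a := by
    refine .of_norm (((summable_norm_inv_weightProduct_mul_inner_mul_zpow e hpos (norm_nonneg z)
      hsum y).mul_right ‖z‖).congr fun n => ?_)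
    simp only [a, norm_mul, norm_zpow]
  have ha' : Summable fun n => a (n - 1) := (Equiv.subRight (1 : ℤ)).summable_iff.mpr ha
  rw [tsum_congr hterm, ha'.tsum_sub ha, sub_eq_zero]
  exact (Equiv.subRight (1 : ℤ)).tsum_eq a

end WeightedShift

theorem bilateral_annulus_subset_localSpectrum_general (S : H →L[ℂ] H)
    (e : HilbertBasis ℤ ℂ H) (ω : ℤ → ℝ) (hpos : ∀ n, 0 < ω n)
    (hS : ∀ n, S (e n) = (ω n : ℂ) • e (n + 1))
    (x : H) (hx : x ≠ 0) (μ : ℂ)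
    (h₁ : (atTop.limsup fun n : ℕ =>
        (∏ i ∈ Finset.range n, ω (-(i : ℤ) - 1)) ^ ((n : ℝ)⁻¹)) < ‖μ‖)
    (h₂ : ‖μ‖ < atTop.liminf fun n : ℕ =>
        (∏ i ∈ Finset.range n, ω (i : ℤ)) ^ ((n : ℝ)⁻¹)) :
    μ ∈ localSpectrum S x := by
  have hbdd := isBoundedUnder_prod_range_rpow_inv (fun i => (hpos _).le)
    (fun i => weight_le_opNorm e hS (-(i : ℤ) - 1))
  have hr : 0 ≤ atTop.limsup fun n : ℕ => (∏ i ∈ Finset.range n, ω (-(i : ℤ) - 1)) ^ ((n : ℝ)⁻¹) :=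
    le_limsup_of_frequently_le
      (.of_forall fun n => Real.rpow_nonneg (Finset.prod_nonneg fun i _ => (hpos _).le) _) hbdd
  have hμ : μ ∈ annulus _ _ := ⟨h₁, h₂⟩
  have hsum : ∀ s ∈ Ioo _ _, Summable fun n => (weightProduct ω n)⁻¹ * s ^ n :=
    fun s hs => summable_inv_weightProduct_mul_zpow hpos (hr.trans_lt hs.1) hbdd hs.1 hs.2
  rintro ⟨U, hU, hμU, f, -, hf⟩
  have hzero : ∀ᶠ z in 𝓝 μ, ∑' n, ((weightProduct ω n : ℂ)⁻¹ * ⟪e n, x⟫_ℂ) * z ^ n = 0 := by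
    filter_upwards [hU.mem_nhds hμU, (isOpen_annulus _ _).mem_nhds hμ] with z hzU hzA
    rw [← hf z hzU]
    exact tsum_inv_weightProduct_mul_inner_sub_smul_mul_zpow e hpos hS
      (ne_zero_of_mem_annulus hr hzA) (hsum _ hzA) (f z)
  have hcoeff := eq_zero_of_tsum_mul_zpow_eventually_eq_zero hr
    (fun s hs => summable_norm_inv_weightProduct_mul_inner_mul_zpow e hpos
      (hr.trans_lt hs.1).le (hsum s hs) x) hμ hzero
  apply hx
  refine e.repr.injective (lp.ext (funext fun n => ?_))
  simpa [e.repr_apply_apply, (weightProduct_pos hpos n).ne'] using congr_fun hcoeff n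

/-- For a bilateral weighted shift `S` with positive bounded weights and every non-zero
`x`, the open annulus `{λ : r₃⁻(S) < |λ| < r₂⁺(S)}` is contained in `σ_S(x)`, where
`r₃⁻(S) = limsup (1/β₋ₙ)^(1/n)` and `r₂⁺(S) = liminf (βₙ)^(1/n)`. -/
theorem bilateral_annulus_subset_localSpectrum (S : H →L[ℂ] H)
    (e : HilbertBasis ℤ ℂ H) (ω : ℤ → ℝ) (hpos : ∀ n, 0 < ω n)
    (hbd : ∃ M : ℝ, ∀ n, ω n ≤ M)
    (hS : ∀ n, S (e n) = (ω n : ℂ) • e (n + 1))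
    (x : H) (hx : x ≠ 0) (μ : ℂ)
    (h₁ : (atTop.limsup fun n : ℕ =>
        (∏ i ∈ Finset.range n, ω (-(i : ℤ) - 1)) ^ ((n : ℝ)⁻¹)) < ‖μ‖)
    (h₂ : ‖μ‖ < atTop.liminf fun n : ℕ =>
        (∏ i ∈ Finset.range n, ω (i : ℤ)) ^ ((n : ℝ)⁻¹)) :
    μ ∈ localSpectrum S x :=
  bilateral_annulus_subset_localSpectrum_general S e ω hpos hS x hx μ h₁ h₂
end

section
/- Let S be a bilateral weighted shift with positive bounded weights. For every non-zero finitely supported vector x (a finite linear combination of the basis vectors e_n, n ∈ ℤ), σ_S(x) = {λ ∈ ℂ : r₂⁻(S) ≤ |λ| ≤ r₃⁺(S)}, where r₂⁻(S) = liminf (1/β_{−n})^{1/n} and r₃⁺(S) = limsup β_n^{1/n}. -/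
open Filter

/-!
Let `β` be the weights with `S (β k • e k) = β (k + 1) • e (k + 1)`.

Off the annulus the local resolvent is an explicit power series: for `‖λ‖ > r₃⁺` the Neumann
series `-∑ λ⁻ⁿ⁻¹ Sⁿ v`, for `‖λ‖ < r₂⁻` the series `∑ λⁿ dₙ₊₁` along a backward orbit
`S dₙ₊₁ = dₙ` of `v`. The growth conditions making them converge hold for `e 0` by the root
test, and they are preserved by `S` and by `S⁻¹`, hence hold for every `e k` and every finitely
supported `x`.

On the annulus, suppose `(S - λ) f(λ) = x` on a disc `D`. The coordinates `ηₙ = ⟪eₙ, f⟫ / βₙ`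
satisfy `ηₙ₋₁ - λ ηₙ = αₙ` with `αₙ = ⟪eₙ, x⟫ / βₙ`, so `λⁿ ηₙ` is constant on each side of the
support `[j + 1, N]` of `x`. The root test against `r₂⁻` and `r₃⁺` makes the constant vanish
wherever `‖λ‖ > r₂⁻`, resp. `0 < ‖λ‖ < r₃⁺`, and the identity theorem spreads this to all of `D`:
`ηⱼ = 0` on `D`, and `η_N = 0` on `D` unless `0 ∈ D`. Telescoping then gives
`∑ₖ αⱼ₊₁₊ₖ λᵏ = -λ^(N-j) η_N`, a polynomial vanishing at `0` (directly, or by the identity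
theorem), whereas its constant term `αⱼ₊₁` is not `0`.
-/

open Asymptotics Finset

section PowerSeries

variable {E : Type*} [NormedAddCommGroup E] [NormedSpace ℂ E] [CompleteSpace E]

theorem hasFPowerSeriesOnBall_tsum_pow_smul {c : ℕ → E} {s : ℝ} (hs : 0 < s)
    (hc : c =O[atTop] (s ^ ·)) :
    ∃ p : FormalMultilinearSeries ℂ ℂ E,
      HasFPowerSeriesOnBall (fun w => ∑' n, w ^ n • c n) p 0 (ENNReal.ofReal s⁻¹) := by
  set p : FormalMultilinearSeries ℂ ℂ E := fun n =>
    ContinuousMultilinearMap.mkPiRing ℂ (Fin n) (c n)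
  have hsum : p.sum = fun w => ∑' n, w ^ n • c n := by
    ext w
    simp [FormalMultilinearSeries.sum, p]
  obtain ⟨C, hC⟩ := hc.bound
  have hrad : ENNReal.ofReal s⁻¹ ≤ p.radius := by
    refine p.le_radius_of_eventually_le C ?_
    filter_upwards [hC] with n hn
    rw [ContinuousMultilinearMap.norm_mkPiRing, Real.coe_toNNReal _ (by positivity), inv_pow,
      ← div_eq_mul_inv, div_le_iff₀ (by positivity)]
    simpa [abs_of_pos hs] using hn
  have hpos : 0 < ENNReal.ofReal s⁻¹ := ENNReal.ofReal_pos.2 (inv_pos.2 hs)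
  exact ⟨p, hsum ▸ (p.hasFPowerSeriesOnBall (hpos.trans_le hrad)).mono hpos hrad⟩

theorem summable_pow_smul_of_isBigO {c : ℕ → E} {s : ℝ} (hs : 0 < s) (hc : c =O[atTop] (s ^ ·))
    {z : ℂ} (hz : ‖z‖ * s < 1) : Summable fun n => z ^ n • c n := by
  obtain ⟨C, hC⟩ := hc.bound
  refine Summable.of_norm_bounded_eventually_nat
    ((summable_geometric_of_lt_one (by positivity) hz).mul_left C) ?_
  filter_upwards [hC] with n hn
  rw [norm_smul, norm_pow, mul_pow, mul_left_comm]
  exact mul_le_mul_of_nonneg_left (by simpa [abs_of_pos hs] using hn) (by positivity)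

theorem analyticAt_tsum_pow_smul_of_isBigO {c : ℕ → E} {s : ℝ} (hs : 0 < s)
    (hc : c =O[atTop] (s ^ ·)) {z : ℂ} (hz : ‖z‖ * s < 1) :
    AnalyticAt ℂ (fun w => ∑' n, w ^ n • c n) z := by
  obtain ⟨p, hp⟩ := hasFPowerSeriesOnBall_tsum_pow_smul hs hc
  refine hp.analyticAt_of_mem ?_
  rw [Metric.mem_eball, edist_zero_right, ← ofReal_norm,
    ENNReal.ofReal_lt_ofReal_iff (by positivity), inv_eq_one_div, lt_div_iff₀ hs]
  exact hz

end PowerSeries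

theorem isBigO_pow_comp_add_one_iff {F : Type*} [NormedAddCommGroup F] {f : ℕ → F} {s : ℝ}
    (hs : s ≠ 0) :
    (fun n => f (n + 1)) =O[atTop] (s ^ ·) ↔ f =O[atTop] (s ^ ·) := by
  have hshift : (fun n : ℕ => s ^ (n + 1)) =Θ[atTop] (s ^ ·) := by
    simp_rw [pow_succ']
    exact (isTheta_const_mul_left hs).2 (isTheta_refl _ _)
  have h := isBigO_map (f := f) (g := (s ^ ·)) (k := (· + 1)) (l := atTop)
  rw [map_add_atTop_eq_nat] at h
  rw [← hshift.isBigO_congr_right]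
  exact h.symm

section LocalResolvent

variable {E : Type*} [NormedAddCommGroup E] [NormedSpace ℂ E]

theorem tsum_pow_smul_eq_add {d : ℕ → E} {w : ℂ} (h : Summable fun n => w ^ n • d n) :
    ∑' n, w ^ n • d n = d 0 + w • ∑' n, w ^ n • d (n + 1) := by
  rw [h.tsum_eq_zero_add, ← tsum_const_smul'']
  simp [pow_succ', mul_smul]

variable (T : E →L[ℂ] E)

def forwardOrbitRadiusLE (R : ℝ) : Submodule ℂ E where
  carrier := {v | ∀ s, R < s → (fun n => (T ^ n) v) =O[atTop] (s ^ ·)}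
  add_mem' hv hw s hs := by simpa only [map_add] using (hv s hs).add (hw s hs)
  zero_mem' s _ := by simpa only [map_zero] using isBigO_zero (s ^ ·) atTop
  smul_mem' c v hv s hs := by
    simp only [map_smul]
    exact (hv s hs).const_smul_left c

def backwardOrbitRadiusGE (R : ℝ) : Submodule ℂ E where
  carrier := {v | ∃ d : ℕ → E, d 0 = v ∧ (∀ n, T (d (n + 1)) = d n) ∧
    ∀ r, 0 < r → r < R → d =O[atTop] (r⁻¹ ^ ·)}
  add_mem' := by
    rintro v w ⟨d, rfl, hd, hdO⟩ ⟨d', rfl, hd', hd'O⟩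
    exact ⟨d + d', rfl, fun n => by simp [hd, hd'],
      fun r hr hrR => (hdO r hr hrR).add (hd'O r hr hrR)⟩
  zero_mem' := ⟨0, rfl, fun n => by simp, fun r _ _ => isBigO_zero _ _⟩
  smul_mem' := by
    rintro c v ⟨d, rfl, hd, hdO⟩
    exact ⟨c • d, rfl, fun n => by simp [hd], fun r hr hrR => (hdO r hr hrR).const_smul_left c⟩

variable {T}

theorem comap_forwardOrbitRadiusLE {R : ℝ} (hR : 0 ≤ R) :
    (forwardOrbitRadiusLE T R).comap (T : E →ₗ[ℂ] E) = forwardOrbitRadiusLE T R := by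
  ext v
  have hpow : ∀ n, (T ^ n) (T v) = (T ^ (n + 1)) v := fun n => by rw [pow_succ]; rfl
  change (∀ s, R < s → _) ↔ ∀ s, R < s → _
  refine forall₂_congr fun s hs => ?_
  simp only [ContinuousLinearMap.coe_coe, hpow]
  exact isBigO_pow_comp_add_one_iff (f := fun n => (T ^ n) v) (hR.trans_lt hs).ne'

theorem comap_backwardOrbitRadiusGE (hT : Function.Injective T) (R : ℝ) :
    (backwardOrbitRadiusGE T R).comap (T : E →ₗ[ℂ] E) = backwardOrbitRadiusGE T R := by
  ext v
  simp only [Submodule.mem_comap, ContinuousLinearMap.coe_coe]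
  constructor
  · rintro ⟨d, hd0, hd, hdO⟩
    have hd1 : d 1 = v := hT (by rw [hd, hd0])
    exact ⟨fun n => d (n + 1), hd1, fun n => hd (n + 1), fun r hr hrR =>
      (isBigO_pow_comp_add_one_iff (inv_ne_zero hr.ne')).2 (hdO r hr hrR)⟩
  · rintro ⟨d, rfl, hd, hdO⟩
    refine ⟨fun | 0 => T (d 0) | n + 1 => d n, rfl, fun | 0 => rfl | n + 1 => hd n,
      fun r hr hrR => ?_⟩
    exact (isBigO_pow_comp_add_one_iff (inv_ne_zero hr.ne')).1 (hdO r hr hrR)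

theorem mem_localResolventSet_of_mem_forwardOrbitRadiusLE [CompleteSpace E] {R : ℝ} (hR : 0 ≤ R)
    {v : E} (hv : v ∈ forwardOrbitRadiusLE T R) {μ : ℂ} (hμ : R < ‖μ‖) :
    μ ∈ localResolventSet T v := by
  set F : ℂ → E := fun w => ∑' n, w ^ n • (T ^ n) v
  have hconv : ∀ z : ℂ, R < ‖z‖ →
      Summable (fun n => z⁻¹ ^ n • (T ^ n) v) ∧ AnalyticAt ℂ F z⁻¹ := by
    intro z hz
    obtain ⟨s, hRs, hsz⟩ := exists_between hz
    have hs : 0 < s := hR.trans_lt hRs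
    have hzs : ‖z⁻¹‖ * s < 1 := by
      rwa [norm_inv, inv_mul_lt_iff₀ (hs.trans hsz), mul_one]
    have hO := hv s hRs
    exact ⟨summable_pow_smul_of_isBigO hs hO hzs, analyticAt_tsum_pow_smul_of_isBigO hs hO hzs⟩
  refine ⟨{z | R < ‖z‖}, isOpen_lt continuous_const continuous_norm, hμ,
    fun z => -(z⁻¹ • F z⁻¹), fun z hz => ?_, fun z hz => ?_⟩
  · have hz0 : z ≠ 0 := norm_pos_iff.1 (hR.trans_lt hz)
    exact ((analyticAt_inv hz0).smul ((hconv z hz).2.comp (analyticAt_inv hz0))).neg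
  · have hz0 : z ≠ 0 := norm_pos_iff.1 (hR.trans_lt (show R < ‖z‖ from hz))
    have hsum := (hconv z hz).1
    have hTF : T (F z⁻¹) = ∑' n, z⁻¹ ^ n • (T ^ (n + 1)) v := by
      rw [T.map_tsum hsum]
      simp only [map_smul, pow_succ']
      rfl
    have hF : F z⁻¹ = v + z⁻¹ • T (F z⁻¹) := by
      rw [hTF]
      exact tsum_pow_smul_eq_add hsum
    calc (T - z • (1 : E →L[ℂ] E)) (-(z⁻¹ • F z⁻¹)) = F z⁻¹ - z⁻¹ • T (F z⁻¹) := by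
          simp [smul_smul, hz0, sub_eq_neg_add, add_comm]
      _ = v := by
          nth_rewrite 1 [hF]
          exact add_sub_cancel_right _ _

theorem mem_localResolventSet_of_mem_backwardOrbitRadiusGE [CompleteSpace E] {R : ℝ} {v : E}
    (hv : v ∈ backwardOrbitRadiusGE T R) {μ : ℂ} (hμ : ‖μ‖ < R) :
    μ ∈ localResolventSet T v := by
  obtain ⟨d, rfl, hd, hdO⟩ := hv
  have hconv : ∀ z : ℂ, ‖z‖ < R → Summable (fun n => z ^ n • d n) ∧
      Summable (fun n => z ^ n • d (n + 1)) ∧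
      AnalyticAt ℂ (fun w => ∑' n, w ^ n • d (n + 1)) z := by
    intro z hz
    obtain ⟨r, hzr, hrR⟩ := exists_between hz
    have hr : 0 < r := (norm_nonneg z).trans_lt hzr
    have hO := hdO r hr hrR
    have hO' := (isBigO_pow_comp_add_one_iff (inv_ne_zero hr.ne')).2 hO
    have hzs : ‖z‖ * r⁻¹ < 1 := by rwa [← div_eq_mul_inv, div_lt_one hr]
    exact ⟨summable_pow_smul_of_isBigO (inv_pos.2 hr) hO hzs,
      summable_pow_smul_of_isBigO (inv_pos.2 hr) hO' hzs,
      analyticAt_tsum_pow_smul_of_isBigO (inv_pos.2 hr) hO' hzs⟩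
  refine ⟨{z | ‖z‖ < R}, isOpen_lt continuous_norm continuous_const, hμ,
    fun z => ∑' n, z ^ n • d (n + 1), fun z hz => (hconv z hz).2.2, fun z hz => ?_⟩
  obtain ⟨hsum, hsum', -⟩ := hconv z hz
  have hTF : T (∑' n, z ^ n • d (n + 1)) = d 0 + z • ∑' n, z ^ n • d (n + 1) := by
    rw [T.map_tsum hsum', ← tsum_pow_smul_eq_add hsum]
    simp only [map_smul, hd]
  simp [hTF]

end LocalResolvent

section RootTest

variable {u : ℕ → ℝ}

theorem isBoundedUnder_rpow_inv (hu : ∀ n, 0 ≤ u n) {M : ℝ} (hM0 : 0 ≤ M)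
    (hM : ∀ n, u n ≤ M ^ n) : IsBoundedUnder (· ≤ ·) atTop fun n => u n ^ (n : ℝ)⁻¹ := by
  refine isBoundedUnder_of_eventually_le (a := M) ?_
  filter_upwards [eventually_ne_atTop 0] with n hn
  rw [Real.rpow_inv_le_iff_of_pos (hu n) hM0 (by positivity), Real.rpow_natCast]
  exact hM n

theorem isBoundedUnder_ge_rpow_inv (hu : ∀ n, 0 ≤ u n) :
    IsBoundedUnder (· ≥ ·) atTop fun n => u n ^ (n : ℝ)⁻¹ :=
  isBoundedUnder_of ⟨0, fun n => Real.rpow_nonneg (hu n) _⟩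

theorem limsup_rpow_inv_nonneg (hu : ∀ n, 0 ≤ u n)
    (hbdd : IsBoundedUnder (· ≤ ·) atTop fun n => u n ^ (n : ℝ)⁻¹) :
    0 ≤ atTop.limsup fun n => u n ^ (n : ℝ)⁻¹ :=
  le_limsup_of_frequently_le (Frequently.of_forall fun n => Real.rpow_nonneg (hu n) _) hbdd

theorem liminf_rpow_inv_nonneg (hu : ∀ n, 0 ≤ u n)
    (hbdd : IsBoundedUnder (· ≤ ·) atTop fun n => u n ^ (n : ℝ)⁻¹) :
    0 ≤ atTop.liminf fun n => u n ^ (n : ℝ)⁻¹ :=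
  le_liminf_of_le hbdd.isCoboundedUnder_ge (Eventually.of_forall fun n => Real.rpow_nonneg (hu n) _)

theorem eventually_le_pow_of_limsup_rpow_inv_lt (hu : ∀ n, 0 ≤ u n)
    (hbdd : IsBoundedUnder (· ≤ ·) atTop fun n => u n ^ (n : ℝ)⁻¹) {s : ℝ}
    (hs : atTop.limsup (fun n => u n ^ (n : ℝ)⁻¹) < s) : ∀ᶠ n in atTop, u n ≤ s ^ n := by
  filter_upwards [eventually_lt_of_limsup_lt hs hbdd, eventually_ne_atTop 0] with n hn hn0
  have hs0 : 0 ≤ s := (Real.rpow_nonneg (hu n) _).trans hn.le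
  rw [Real.rpow_inv_lt_iff_of_pos (hu n) hs0 (by positivity), Real.rpow_natCast] at hn
  exact hn.le

theorem frequently_pow_le_of_lt_limsup_rpow_inv (hu : ∀ n, 0 ≤ u n) {s : ℝ} (hs0 : 0 ≤ s)
    (hs : s < atTop.limsup (fun n => u n ^ (n : ℝ)⁻¹)) : ∃ᶠ n in atTop, s ^ n ≤ u n := by
  refine ((frequently_lt_of_lt_limsup (isBoundedUnder_ge_rpow_inv hu).isCoboundedUnder_le
    hs).and_eventually (eventually_ne_atTop 0)).mono fun n ⟨hn, hn0⟩ => ?_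
  rw [Real.lt_rpow_inv_iff_of_pos hs0 (hu n) (by positivity), Real.rpow_natCast] at hn
  exact hn.le

theorem eventually_pow_le_of_lt_liminf_rpow_inv_s16 (hu : ∀ n, 0 ≤ u n) {s : ℝ} (hs0 : 0 ≤ s)
    (hs : s < atTop.liminf (fun n => u n ^ (n : ℝ)⁻¹)) : ∀ᶠ n in atTop, s ^ n ≤ u n := by
  filter_upwards [eventually_lt_of_lt_liminf hs (isBoundedUnder_ge_rpow_inv hu),
    eventually_ne_atTop 0] with n hn hn0
  rw [Real.lt_rpow_inv_iff_of_pos hs0 (hu n) (by positivity), Real.rpow_natCast] at hn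
  exact hn.le

theorem frequently_le_pow_of_liminf_rpow_inv_lt (hu : ∀ n, 0 ≤ u n)
    (hbdd : IsBoundedUnder (· ≤ ·) atTop fun n => u n ^ (n : ℝ)⁻¹) {s : ℝ}
    (hs : atTop.liminf (fun n => u n ^ (n : ℝ)⁻¹) < s) : ∃ᶠ n in atTop, u n ≤ s ^ n := by
  refine ((frequently_lt_of_liminf_lt hbdd.isCoboundedUnder_ge hs).and_eventually
    (eventually_ne_atTop 0)).mono fun n ⟨hn, hn0⟩ => ?_
  have hs0 : 0 ≤ s := (Real.rpow_nonneg (hu n) _).trans hn.le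
  rw [Real.rpow_inv_lt_iff_of_pos (hu n) hs0 (by positivity), Real.rpow_natCast] at hn
  exact hn.le

end RootTest

section Recurrence

theorem eq_zero_of_frequently_norm_le_geometric {F : Type*} [NormedAddCommGroup F] {x : F}
    {B q : ℝ} (hq0 : 0 ≤ q) (hq : q < 1) (h : ∃ᶠ n in atTop, ‖x‖ ≤ B * q ^ n) : x = 0 := by
  by_contra hx
  have hlim : Tendsto (fun n => B * q ^ n) atTop (nhds 0) := by
    simpa using (tendsto_pow_atTop_nhds_zero_of_lt_one hq0 hq).const_mul B
  exact h ((hlim.eventually (gt_mem_nhds (norm_pos_iff.2 hx))).mono fun n hn => not_le.2 hn)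

section

variable {η α : ℤ → ℂ} {z : ℂ}

theorem sub_pow_mul_eq_sum (hrec : ∀ n, η (n - 1) - z * η n = α n) (j : ℤ) (K : ℕ) :
    η j - z ^ K * η (j + K) = ∑ k ∈ range K, z ^ k * α (j + k + 1) := by
  induction K with
  | zero => simp
  | succ K ih =>
    rw [sum_range_succ, ← ih, ← hrec (j + K + 1), add_sub_cancel_right]
    push_cast
    ring_nf

theorem eq_zero_of_frequently_norm_mul_pow_le (hrec : ∀ n, η (n - 1) - z * η n = α n)
    (hz : z ≠ 0) {N : ℤ} (hα : ∀ n, N < n → α n = 0) {B ρ : ℝ} (hzρ : ‖z‖ < ρ)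
    (hfreq : ∃ᶠ n : ℕ in atTop, ‖η n‖ * ρ ^ n ≤ B) : η N = 0 := by
  have hconst : ∀ n, N ≤ n → z ^ n * η n = z ^ N * η N := by
    intro n hn
    induction n, hn using Int.leInduction with
    | base => rfl
    | succ n hn ih =>
      have h := hrec (n + 1)
      rw [hα _ (by omega), add_sub_cancel_right, sub_eq_zero] at h
      rw [← ih, h, zpow_add_one₀ hz]
      ring
  have hρ : 0 < ρ := (norm_nonneg z).trans_lt hzρ
  suffices z ^ N * η N = 0 by simpa [zpow_ne_zero N hz] using this
  refine eq_zero_of_frequently_norm_le_geometric (B := B) (by positivity)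
    ((div_lt_one hρ).2 hzρ) ((hfreq.and_eventually (eventually_ge_atTop N.toNat)).mono ?_)
  rintro n ⟨hn, hNn⟩
  rw [← hconst n (by omega), zpow_natCast, norm_mul, norm_pow, div_pow, mul_div_assoc',
    le_div_iff₀ (by positivity), mul_assoc, mul_comm B]
  exact mul_le_mul_of_nonneg_left hn (by positivity)

theorem eq_zero_of_frequently_norm_le_mul_pow (hrec : ∀ n, η (n - 1) - z * η n = α n)
    {j : ℤ} (hα : ∀ n ≤ j, α n = 0) {B b : ℝ} (hb0 : 0 ≤ b) (hbz : b < ‖z‖)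
    (hfreq : ∃ᶠ n : ℕ in atTop, ‖η (-n)‖ ≤ B * b ^ n) : η j = 0 := by
  have hz : z ≠ 0 := norm_pos_iff.1 (hb0.trans_lt hbz)
  have hconst : ∀ n ≤ j, z ^ n * η n = z ^ j * η j := by
    intro n hn
    induction n, hn using Int.leInductionDown with
    | base => rfl
    | pred n hn ih =>
      have h := hrec n
      rw [hα n hn, sub_eq_zero] at h
      rw [← ih, h, ← mul_assoc, ← zpow_add_one₀ hz, sub_add_cancel]
  suffices z ^ j * η j = 0 by simpa [zpow_ne_zero j hz] using this
  refine eq_zero_of_frequently_norm_le_geometric (B := B) (by positivity)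
    ((div_lt_one (hb0.trans_lt hbz)).2 hbz)
    ((hfreq.and_eventually (eventually_ge_atTop (-j).toNat)).mono ?_)
  rintro n ⟨hn, hjn⟩
  rw [← hconst (-n) (by omega), zpow_neg, zpow_natCast, norm_mul, norm_inv, norm_pow, div_pow,
    mul_div_assoc', inv_mul_eq_div, div_le_div_iff_of_pos_right (by positivity)]
  exact hn

end

theorem eq_zero_of_eqOn_zero_of_recurrence {η : ℤ → ℂ → ℂ} {α : ℤ → ℂ} {D : Set ℂ} {μ : ℂ}
    (hD : IsOpen D) (hμ : μ ∈ D) (hrec : ∀ z ∈ D, ∀ n, η (n - 1) z - z * η n z = α n)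
    {j N : ℤ} (hjN : j < N) (hj : Set.EqOn (η j) 0 D) (hN : 0 ∈ D ∨ Set.EqOn (η N) 0 D) :
    α (j + 1) = 0 := by
  obtain ⟨K, rfl⟩ : ∃ K : ℕ, N = j + K := ⟨(N - j).toNat, by omega⟩
  have hK : K ≠ 0 := by omega
  set Φ : ℂ → ℂ := fun z => ∑ k ∈ range K, z ^ k * α (j + k + 1)
  have hΦ : ∀ z ∈ D, Φ z = -(z ^ K * η (j + K) z) := fun z hz => by
    have h0 : η j z = 0 := hj hz
    rw [← zero_sub, ← h0]
    exact (sub_pow_mul_eq_sum (η := (η · z)) (hrec z hz) j K).symm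
  have hΦ0 : Φ 0 = α (j + 1) := by
    rw [show Φ 0 = ∑ k ∈ range K, 0 ^ k * α (j + k + 1) from rfl,
      sum_eq_single_of_mem 0 (mem_range.2 (Nat.pos_of_ne_zero hK)) fun k _ hk => by simp [hk]]
    simp
  rw [← hΦ0]
  rcases hN with h0 | hN
  · simp [hΦ 0 h0, hK]
  · have hΦan : AnalyticOnNhd ℂ Φ Set.univ := fun z _ =>
      (by fun_prop : Differentiable ℂ Φ).analyticAt z
    exact hΦan.eqOn_zero_of_preconnected_of_eventuallyEq_zero isPreconnected_univ
      (Set.mem_univ μ) (eventuallyEq_of_mem (hD.mem_nhds hμ) fun z hz => by simp [hΦ z hz, hN hz])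
      (Set.mem_univ 0)

end Recurrence

section ShiftWeight

-- `shiftWeight ω` is the sequence `β` of the paper: `β 0 = 1` and `β (n + 1) = β n * ω n`.
noncomputable def shiftWeight (ω : ℤ → ℝ) : ℤ → ℝ
  | Int.ofNat n => ∏ i ∈ range n, ω i
  | Int.negSucc n => (∏ i ∈ range (n + 1), ω (-(i : ℤ) - 1))⁻¹

variable {ω : ℤ → ℝ}

theorem shiftWeight_zero : shiftWeight ω 0 = 1 := prod_range_zero _

theorem shiftWeight_neg_natCast (n : ℕ) :
    shiftWeight ω (-n) = (∏ i ∈ range n, ω (-(i : ℤ) - 1))⁻¹ := by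
  cases n with
  | zero => simp [shiftWeight]
  | succ n => rfl

theorem shiftWeight_pos (hω : ∀ n, 0 < ω n) (n : ℤ) : 0 < shiftWeight ω n := by
  cases n with
  | ofNat n => exact prod_pos fun i _ => hω i
  | negSucc n => exact inv_pos.2 (prod_pos fun i _ => hω _)

theorem shiftWeight_ne_zero (hω : ∀ n, ω n ≠ 0) (n : ℤ) : shiftWeight ω n ≠ 0 := by
  cases n with
  | ofNat n => exact prod_ne_zero_iff.2 fun i _ => hω i
  | negSucc n => exact inv_ne_zero (prod_ne_zero_iff.2 fun i _ => hω _)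

theorem shiftWeight_add_one (hω : ∀ n, ω n ≠ 0) (n : ℤ) :
    shiftWeight ω (n + 1) = shiftWeight ω n * ω n := by
  rcases n with n | n | n
  · exact prod_range_succ _ n
  · simp [shiftWeight, hω]
  · have h : Int.negSucc (n + 1) + 1 = Int.negSucc n := rfl
    rw [h]
    simp only [shiftWeight, prod_range_succ _ (n + 1), mul_inv]
    rw [mul_assoc, Int.negSucc_eq, neg_add', inv_mul_cancel₀ (hω _), mul_one]

theorem prod_range_le_pow (hω : ∀ n, 0 < ω n) {M : ℝ} (hM : ∀ n, ω n ≤ M) (g : ℕ → ℤ) (n : ℕ) :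
    ∏ i ∈ range n, ω (g i) ≤ M ^ n :=
  (prod_le_prod (fun i _ => (hω _).le) fun i _ => hM _).trans_eq (by simp)

end ShiftWeight

section Radii

-- `r₃⁺(S)` and `r₂⁻(S)` of the paper.
noncomputable def outerRadius (ω : ℤ → ℝ) : ℝ :=
  atTop.limsup fun n : ℕ => (∏ i ∈ Finset.range n, ω (i : ℤ)) ^ ((n : ℝ)⁻¹)

noncomputable def innerRadius (ω : ℤ → ℝ) : ℝ :=
  atTop.liminf fun n : ℕ => (∏ i ∈ Finset.range n, ω (-(i : ℤ) - 1)) ^ ((n : ℝ)⁻¹)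

variable {ω : ℤ → ℝ} {s : ℝ}

theorem isBoundedUnder_rpow_inv_prod (hω : ∀ n, 0 < ω n) {M : ℝ} (hM : ∀ n, ω n ≤ M)
    (g : ℕ → ℤ) :
    IsBoundedUnder (· ≤ ·) atTop fun n : ℕ => (∏ i ∈ range n, ω (g i)) ^ (n : ℝ)⁻¹ :=
  isBoundedUnder_rpow_inv (fun _ => (prod_pos fun _ _ => hω _).le) ((hω 0).le.trans (hM 0))
    (prod_range_le_pow hω hM g)

theorem outerRadius_nonneg (hω : ∀ n, 0 < ω n) {M : ℝ} (hM : ∀ n, ω n ≤ M) :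
    0 ≤ outerRadius ω :=
  limsup_rpow_inv_nonneg (fun _ => (prod_pos fun _ _ => hω _).le)
    (isBoundedUnder_rpow_inv_prod hω hM _)

theorem innerRadius_nonneg (hω : ∀ n, 0 < ω n) {M : ℝ} (hM : ∀ n, ω n ≤ M) :
    0 ≤ innerRadius ω :=
  liminf_rpow_inv_nonneg (fun _ => (prod_pos fun _ _ => hω _).le)
    (isBoundedUnder_rpow_inv_prod hω hM _)

theorem eventually_shiftWeight_le_pow (hω : ∀ n, 0 < ω n) {M : ℝ} (hM : ∀ n, ω n ≤ M)
    (hs : outerRadius ω < s) : ∀ᶠ n : ℕ in atTop, shiftWeight ω n ≤ s ^ n :=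
  eventually_le_pow_of_limsup_rpow_inv_lt (fun n => (shiftWeight_pos hω n).le)
    (isBoundedUnder_rpow_inv_prod hω hM _) hs

theorem frequently_pow_le_shiftWeight (hω : ∀ n, 0 < ω n) (hs0 : 0 ≤ s)
    (hs : s < outerRadius ω) : ∃ᶠ n : ℕ in atTop, s ^ n ≤ shiftWeight ω n :=
  frequently_pow_le_of_lt_limsup_rpow_inv (fun n => (shiftWeight_pos hω n).le) hs0 hs

theorem eventually_shiftWeight_neg_le_inv_pow (hω : ∀ n, 0 < ω n) (hs0 : 0 < s)
    (hs : s < innerRadius ω) : ∀ᶠ n : ℕ in atTop, shiftWeight ω (-n) ≤ s⁻¹ ^ n := by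
  filter_upwards [eventually_pow_le_of_lt_liminf_rpow_inv_s16
    (fun _ => (prod_pos fun _ _ => hω _).le) hs0.le hs] with n hn
  rw [shiftWeight_neg_natCast, inv_pow]
  exact inv_anti₀ (by positivity) hn

theorem frequently_inv_shiftWeight_neg_le_pow (hω : ∀ n, 0 < ω n) {M : ℝ}
    (hM : ∀ n, ω n ≤ M) (hs : innerRadius ω < s) :
    ∃ᶠ n : ℕ in atTop, (shiftWeight ω (-n))⁻¹ ≤ s ^ n := by
  simpa only [shiftWeight_neg_natCast, inv_inv] using frequently_le_pow_of_liminf_rpow_inv_lt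
    (fun _ => (prod_pos fun _ _ => hω _).le) (isBoundedUnder_rpow_inv_prod hω hM _) hs

end Radii

theorem forall_mem_of_comap_eq {E : Type*} [AddCommGroup E] [Module ℂ E] {T : E →ₗ[ℂ] E}
    {p : Submodule ℂ E} (hp : p.comap T = p) {b : ℤ → E} (hb : ∀ k, T (b k) = b (k + 1))
    (h0 : b 0 ∈ p) (k : ℤ) : b k ∈ p := by
  induction k using Int.induction_on with
  | zero => exact h0
  | succ k ih => rw [← hb, ← Submodule.mem_comap, hp]; exact ih
  | pred k ih => rw [← hp, Submodule.mem_comap, hb, sub_add_cancel]; exact ih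

section WeightedShift

variable {H : Type*} [NormedAddCommGroup H] [InnerProductSpace ℂ H] {S : H →L[ℂ] H}
  {e : HilbertBasis ℤ ℂ H} {ω : ℤ → ℝ}

theorem inner_basis_weightedShift (hS : ∀ n, S (e n) = (ω n : ℂ) • e (n + 1)) (n : ℤ) (y : H) :
    inner ℂ (e n) (S y) = ω (n - 1) * inner ℂ (e (n - 1)) y := by
  have h : (innerSL ℂ (e n)).comp S = (ω (n - 1) : ℂ) • innerSL ℂ (e (n - 1)) := by
    refine ContinuousLinearMap.ext_on
      (Submodule.dense_iff_topologicalClosure_eq_top.2 e.dense_span) ?_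
    rintro _ ⟨k, rfl⟩
    simp only [ContinuousLinearMap.comp_apply, innerSL_apply_apply, hS, inner_smul_right,
      orthonormal_iff_ite.1 e.orthonormal, _root_.smul_apply, smul_eq_mul]
    by_cases hk : n = k + 1
    · simp [hk]
    · simp [hk, show n - 1 ≠ k by omega]
  simpa using congr($h y)

theorem injective_weightedShift (hω : ∀ n, ω n ≠ 0)
    (hS : ∀ n, S (e n) = (ω n : ℂ) • e (n + 1)) : Function.Injective S := by
  refine (injective_iff_map_eq_zero S).2 fun y hy => ?_
  have hcoord : ∀ n, inner ℂ (e n) y = 0 := fun n => by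
    simpa [hy, hω] using (inner_basis_weightedShift hS (n + 1) y).symm
  have h0 : (fun i => e.repr y i • e i) = 0 :=
    funext fun i => by rw [e.repr_apply_apply, hcoord, zero_smul, Pi.zero_apply]
  exact (e.hasSum_repr y).unique (h0 ▸ hasSum_zero)

theorem weightedShift_shiftWeight_smul (hω : ∀ n, ω n ≠ 0)
    (hS : ∀ n, S (e n) = (ω n : ℂ) • e (n + 1)) (k : ℤ) :
    S ((shiftWeight ω k : ℂ) • e k) = (shiftWeight ω (k + 1) : ℂ) • e (k + 1) := by
  rw [map_smul, hS, smul_smul, shiftWeight_add_one hω, Complex.ofReal_mul]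

theorem norm_shiftWeight_smul_basis (hω : ∀ n, 0 < ω n) (k : ℤ) :
    ‖(shiftWeight ω k : ℂ) • e k‖ = shiftWeight ω k := by
  rw [norm_smul, e.orthonormal.1 k, mul_one, Complex.norm_real, Real.norm_of_nonneg
    (shiftWeight_pos hω k).le]

theorem span_basis_le_of_comap_eq (hω : ∀ n, ω n ≠ 0) (hS : ∀ n, S (e n) = (ω n : ℂ) • e (n + 1))
    {p : Submodule ℂ H} (hp : p.comap (S : H →ₗ[ℂ] H) = p) (h0 : e 0 ∈ p) :
    Submodule.span ℂ (Set.range e) ≤ p := by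
  have hb0 : (shiftWeight ω 0 : ℂ) • e 0 ∈ p := by simpa [shiftWeight_zero] using h0
  refine Submodule.span_le.2 (Set.range_subset_iff.2 fun k => ?_)
  have hk := p.smul_mem ((shiftWeight ω k : ℂ)⁻¹)
    (forall_mem_of_comap_eq hp (weightedShift_shiftWeight_smul hω hS) hb0 k)
  rwa [smul_smul, inv_mul_cancel₀ (by exact_mod_cast (shiftWeight_ne_zero hω k)), one_smul] at hk

theorem basis_zero_mem_forwardOrbitRadiusLE (hω : ∀ n, 0 < ω n) {M : ℝ} (hM : ∀ n, ω n ≤ M)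
    (hS : ∀ n, S (e n) = (ω n : ℂ) • e (n + 1)) :
    e 0 ∈ forwardOrbitRadiusLE S (outerRadius ω) := by
  have hpow : ∀ n : ℕ, (S ^ n) (e 0) = (shiftWeight ω n : ℂ) • e n := by
    intro n
    induction n with
    | zero => simp [shiftWeight_zero]
    | succ n ih =>
      rw [pow_succ']
      change S ((S ^ n) (e 0)) = _
      rw [ih, weightedShift_shiftWeight_smul (fun n => (hω n).ne') hS, Nat.cast_succ]
  intro s hs
  simp only [hpow]
  refine IsBigO.of_bound 1 ?_
  filter_upwards [eventually_shiftWeight_le_pow hω hM hs] with n hn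
  rw [norm_shiftWeight_smul_basis hω, one_mul]
  exact hn.trans (Real.le_norm_self _)

theorem basis_zero_mem_backwardOrbitRadiusGE (hω : ∀ n, 0 < ω n)
    (hS : ∀ n, S (e n) = (ω n : ℂ) • e (n + 1)) :
    e 0 ∈ backwardOrbitRadiusGE S (innerRadius ω) := by
  refine ⟨fun n => (shiftWeight ω (-n) : ℂ) • e (-n), by simp [shiftWeight_zero], fun n => ?_,
    fun r hr hrR => IsBigO.of_bound 1 ?_⟩
  · rw [weightedShift_shiftWeight_smul (fun n => (hω n).ne') hS]
    congr 3 <;> push_cast <;> ring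
  · filter_upwards [eventually_shiftWeight_neg_le_inv_pow hω hr hrR] with n hn
    rw [norm_shiftWeight_smul_basis hω, one_mul]
    exact hn.trans (Real.le_norm_self _)

theorem span_basis_le_forwardOrbitRadiusLE (hω : ∀ n, 0 < ω n) {M : ℝ} (hM : ∀ n, ω n ≤ M)
    (hS : ∀ n, S (e n) = (ω n : ℂ) • e (n + 1)) :
    Submodule.span ℂ (Set.range e) ≤ forwardOrbitRadiusLE S (outerRadius ω) :=
  span_basis_le_of_comap_eq (fun n => (hω n).ne') hS
    (comap_forwardOrbitRadiusLE (outerRadius_nonneg hω hM))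
    (basis_zero_mem_forwardOrbitRadiusLE hω hM hS)

theorem span_basis_le_backwardOrbitRadiusGE (hω : ∀ n, 0 < ω n)
    (hS : ∀ n, S (e n) = (ω n : ℂ) • e (n + 1)) :
    Submodule.span ℂ (Set.range e) ≤ backwardOrbitRadiusGE S (innerRadius ω) :=
  span_basis_le_of_comap_eq (fun n => (hω n).ne') hS
    (comap_backwardOrbitRadiusGE (injective_weightedShift (fun n => (hω n).ne') hS) _)
    (basis_zero_mem_backwardOrbitRadiusGE hω hS)

end WeightedShift

section Annulus

variable {E : Type*} [NormedAddCommGroup E] [NormedSpace ℝ E] {μ : E} {ε r : ℝ}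

theorem nonempty_ball_inter_lt_norm [Nontrivial E] (hε : 0 < ε) (hr : r ≤ ‖μ‖) :
    (Metric.ball μ ε ∩ {z | r < ‖z‖}).Nonempty := by
  have hμ : μ ∈ closure {z : E | r < ‖z‖} := by
    rw [show {z : E | r < ‖z‖} = (Metric.closedBall 0 r)ᶜ by ext; simp, closure_compl,
      interior_closedBall']
    simpa using hr
  exact mem_closure_iff_nhds.1 hμ _ (Metric.ball_mem_nhds μ hε)

theorem nonempty_ball_inter_ball_zero (hε : 0 < ε) (hr : 0 < r) (hμ : ‖μ‖ ≤ r) :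
    (Metric.ball μ ε ∩ Metric.ball 0 r).Nonempty :=
  mem_closure_iff_nhds.1 (by rw [closure_ball 0 hr.ne']; simpa using hμ) _
    (Metric.ball_mem_nhds μ hε)

end Annulus

section WeightedShiftSpectrum

variable {H : Type*} [NormedAddCommGroup H] [InnerProductSpace ℂ H] {S : H →L[ℂ] H}
  {e : HilbertBasis ℤ ℂ H} {ω : ℤ → ℝ}

theorem exists_support_bounds {x : H} (hx0 : x ∈ Submodule.span ℂ (Set.range e)) (hx : x ≠ 0) :
    ∃ j N : ℤ, j < N ∧ inner ℂ (e (j + 1)) x ≠ 0 ∧ (∀ n ≤ j, inner ℂ (e n) x = 0) ∧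
      ∀ n, N < n → inner ℂ (e n) x = 0 := by
  obtain ⟨c, rfl⟩ := Finsupp.mem_span_range_iff_exists_finsupp.1 hx0
  have hcoord : ∀ n, inner ℂ (e n) (c.sum fun i a => a • e i) = c n := fun n => by
    rw [← Finsupp.linearCombination_apply, e.orthonormal.inner_right_finsupp]
  have hc : c.support.Nonempty := Finsupp.support_nonempty_iff.2 (by rintro rfl; simp at hx)
  refine ⟨c.support.min' hc - 1, c.support.max' hc, ?_, ?_, fun n hn => ?_, fun n hn => ?_⟩
  · linarith [c.support.min'_le_max' hc]
  · rw [hcoord, sub_add_cancel, ← Finsupp.mem_support_iff]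
    exact c.support.min'_mem hc
  · rw [hcoord, ← Finsupp.notMem_support_iff]
    exact fun hn' => by linarith [c.support.min'_le n hn']
  · rw [hcoord, ← Finsupp.notMem_support_iff]
    exact fun hn' => by linarith [c.support.le_max' n hn']

-- The coordinates of `y` in the orthogonal basis `shiftWeight ω n • e n`, which `S` shifts
-- without weights.
noncomputable def weightedCoord (e : HilbertBasis ℤ ℂ H) (ω : ℤ → ℝ) (y : H) (n : ℤ) : ℂ :=
  inner ℂ (e n) y / shiftWeight ω n

theorem weightedCoord_eq_zero_iff (hω : ∀ n, ω n ≠ 0) {y : H} {n : ℤ} :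
    weightedCoord e ω y n = 0 ↔ inner ℂ (e n) y = 0 := by
  simp [weightedCoord, shiftWeight_ne_zero hω]

theorem norm_weightedCoord_le (hω : ∀ n, 0 < ω n) (y : H) (n : ℤ) :
    ‖weightedCoord e ω y n‖ ≤ ‖y‖ * (shiftWeight ω n)⁻¹ := by
  rw [weightedCoord, norm_div, Complex.norm_real,
    Real.norm_of_nonneg (shiftWeight_pos hω n).le, div_eq_mul_inv]
  refine mul_le_mul_of_nonneg_right ?_ (inv_nonneg.2 (shiftWeight_pos hω n).le)
  simpa [e.orthonormal.1 n] using norm_inner_le_norm (𝕜 := ℂ) (e n) y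

theorem weightedCoord_recurrence (hω : ∀ n, ω n ≠ 0)
    (hS : ∀ n, S (e n) = (ω n : ℂ) • e (n + 1)) {x y : H} {z : ℂ}
    (hy : (S - z • (1 : H →L[ℂ] H)) y = x) (n : ℤ) :
    weightedCoord e ω y (n - 1) - z * weightedCoord e ω y n = weightedCoord e ω x n := by
  have h := congr(inner ℂ (e n) $hy)
  rw [sub_apply, inner_sub_right, smul_apply, inner_smul_right, one_apply_eq_self,
    inner_basis_weightedShift hS] at h
  have hβ : shiftWeight ω n = shiftWeight ω (n - 1) * ω (n - 1) := by
    rw [← shiftWeight_add_one hω, sub_add_cancel]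
  have hβ0 : (shiftWeight ω (n - 1) : ℂ) ≠ 0 := by exact_mod_cast shiftWeight_ne_zero hω (n - 1)
  have hω0 : (ω (n - 1) : ℂ) ≠ 0 := by exact_mod_cast hω (n - 1)
  rw [weightedCoord, weightedCoord, weightedCoord, ← h, hβ]
  push_cast
  field_simp

theorem inner_basis_eq_zero_of_innerRadius_lt (hω : ∀ n, 0 < ω n) {M : ℝ} (hM : ∀ n, ω n ≤ M)
    (hS : ∀ n, S (e n) = (ω n : ℂ) • e (n + 1)) {x y : H} {z : ℂ}
    (hy : (S - z • (1 : H →L[ℂ] H)) y = x) {j : ℤ} (hlow : ∀ n ≤ j, inner ℂ (e n) x = 0)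
    (hz : innerRadius ω < ‖z‖) : inner ℂ (e j) y = 0 := by
  have hω' : ∀ n, ω n ≠ 0 := fun n => (hω n).ne'
  obtain ⟨b, hRb, hbz⟩ := exists_between hz
  refine (weightedCoord_eq_zero_iff hω').1 <| eq_zero_of_frequently_norm_le_mul_pow
    (weightedCoord_recurrence hω' hS hy) (fun n hn => (weightedCoord_eq_zero_iff hω').2 (hlow n hn))
    (B := ‖y‖) ((innerRadius_nonneg hω hM).trans hRb.le) hbz
    ((frequently_inv_shiftWeight_neg_le_pow hω hM hRb).mono fun n hn => ?_)
  exact (norm_weightedCoord_le hω y _).trans (mul_le_mul_of_nonneg_left hn (norm_nonneg y))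

theorem inner_basis_eq_zero_of_lt_outerRadius (hω : ∀ n, 0 < ω n)
    (hS : ∀ n, S (e n) = (ω n : ℂ) • e (n + 1)) {x y : H} {z : ℂ}
    (hy : (S - z • (1 : H →L[ℂ] H)) y = x) {N : ℤ} (hup : ∀ n, N < n → inner ℂ (e n) x = 0)
    (hz0 : z ≠ 0) (hz : ‖z‖ < outerRadius ω) : inner ℂ (e N) y = 0 := by
  have hω' : ∀ n, ω n ≠ 0 := fun n => (hω n).ne'
  obtain ⟨ρ, hzρ, hρR⟩ := exists_between hz
  have hρ0 : 0 ≤ ρ := (norm_nonneg z).trans hzρ.le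
  refine (weightedCoord_eq_zero_iff hω').1 <| eq_zero_of_frequently_norm_mul_pow_le
    (weightedCoord_recurrence hω' hS hy) hz0
    (fun n hn => (weightedCoord_eq_zero_iff hω').2 (hup n hn)) (B := ‖y‖) hzρ
    ((frequently_pow_le_shiftWeight hω hρ0 hρR).mono fun n hn => ?_)
  have hβ := shiftWeight_pos hω n
  calc ‖weightedCoord e ω y n‖ * ρ ^ n ≤ ‖y‖ * (shiftWeight ω n)⁻¹ * shiftWeight ω n :=
        mul_le_mul (norm_weightedCoord_le hω y _) hn (pow_nonneg hρ0 n) (by positivity)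
    _ = ‖y‖ := inv_mul_cancel_right₀ hβ.ne' _

theorem notMem_localResolventSet_weightedShift (hω : ∀ n, 0 < ω n) {M : ℝ}
    (hM : ∀ n, ω n ≤ M) (hS : ∀ n, S (e n) = (ω n : ℂ) • e (n + 1)) {x : H} (hx : x ≠ 0)
    (hx0 : x ∈ Submodule.span ℂ (Set.range e)) {μ : ℂ} (hμ₁ : innerRadius ω ≤ ‖μ‖)
    (hμ₂ : ‖μ‖ ≤ outerRadius ω) : μ ∉ localResolventSet S x := by
  rintro ⟨U, hUo, hμU, f, hf, hfx⟩
  obtain ⟨ε, hε, hDU⟩ := Metric.isOpen_iff.1 hUo μ hμU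
  obtain ⟨j, N, hjN, hxj, hlow, hup⟩ := exists_support_bounds hx0 hx
  have hω' : ∀ n, ω n ≠ 0 := fun n => (hω n).ne'
  have hD : IsPreconnected (Metric.ball μ ε) := (convex_ball μ ε).isPreconnected
  have hcoord : ∀ n, AnalyticOnNhd ℂ (fun z => weightedCoord e ω (f z) n) (Metric.ball μ ε) :=
    fun n => ((innerSL ℂ (e n)).comp_analyticOnNhd (hf.mono hDU)).div_const
  have hj : Set.EqOn (fun z => weightedCoord e ω (f z) j) 0 (Metric.ball μ ε) := by
    obtain ⟨z₀, hz₀⟩ := nonempty_ball_inter_lt_norm hε hμ₁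
    refine (hcoord j).eqOn_zero_of_preconnected_of_eventuallyEq_zero hD hz₀.1
      (eventuallyEq_of_mem ((Metric.isOpen_ball.inter (isOpen_lt continuous_const
        continuous_norm)).mem_nhds hz₀) fun z hz => ?_)
    exact (weightedCoord_eq_zero_iff hω').2
      (inner_basis_eq_zero_of_innerRadius_lt hω hM hS (hfx z (hDU hz.1)) hlow hz.2)
  have hN : 0 ∈ Metric.ball μ ε ∨
      Set.EqOn (fun z => weightedCoord e ω (f z) N) 0 (Metric.ball μ ε) := by
    refine or_iff_not_imp_left.2 fun h0 => ?_
    have hμ0 : 0 < ‖μ‖ := norm_pos_iff.2 fun h => h0 (h ▸ Metric.mem_ball_self hε)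
    obtain ⟨z₀, hz₀⟩ := nonempty_ball_inter_ball_zero hε (hμ0.trans_le hμ₂) hμ₂
    refine (hcoord N).eqOn_zero_of_preconnected_of_eventuallyEq_zero hD hz₀.1
      (eventuallyEq_of_mem ((Metric.isOpen_ball.inter Metric.isOpen_ball).mem_nhds hz₀)
        fun z hz => ?_)
    exact (weightedCoord_eq_zero_iff hω').2 (inner_basis_eq_zero_of_lt_outerRadius hω hS
      (hfx z (hDU hz.1)) hup (fun h => h0 (h ▸ hz.1)) (mem_ball_zero_iff.1 hz.2))
  refine hxj ((weightedCoord_eq_zero_iff hω').1 ?_)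
  exact eq_zero_of_eqOn_zero_of_recurrence (η := fun n z => weightedCoord e ω (f z) n)
    Metric.isOpen_ball (Metric.mem_ball_self hε)
    (fun z hz => weightedCoord_recurrence hω' hS (hfx z (hDU hz))) hjN hj hN

end WeightedShiftSpectrum

variable {H : Type*} [NormedAddCommGroup H] [InnerProductSpace ℂ H] [CompleteSpace H]

/-- For a bilateral weighted shift `S` with positive bounded weights and every non-zero
finitely supported vector `x` (a finite linear combination of the basis vectors `e n`),
`σ_S(x) = {λ : r₂⁻(S) ≤ |λ| ≤ r₃⁺(S)}` where `r₂⁻(S) = liminf (1/β₋ₙ)^(1/n)` and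
`r₃⁺(S) = limsup (βₙ)^(1/n)`. -/
theorem bilateral_localSpectrum_finitely_supported (S : H →L[ℂ] H)
    (e : HilbertBasis ℤ ℂ H) (ω : ℤ → ℝ) (hpos : ∀ n, 0 < ω n)
    (hbd : ∃ M : ℝ, ∀ n, ω n ≤ M)
    (hS : ∀ n, S (e n) = (ω n : ℂ) • e (n + 1))
    (x : H) (hx : x ≠ 0)
    (hx0 : x ∈ Submodule.span ℂ (Set.range fun n : ℤ => e n)) :
    localSpectrum S x =
      {μ : ℂ |
        (atTop.liminf fun n : ℕ =>
          (∏ i ∈ Finset.range n, ω (-(i : ℤ) - 1)) ^ ((n : ℝ)⁻¹)) ≤ ‖μ‖ ∧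
        ‖μ‖ ≤ atTop.limsup fun n : ℕ =>
          (∏ i ∈ Finset.range n, ω (i : ℤ)) ^ ((n : ℝ)⁻¹)} := by
  obtain ⟨M, hM⟩ := hbd
  ext μ
  change μ ∉ localResolventSet S x ↔ innerRadius ω ≤ ‖μ‖ ∧ ‖μ‖ ≤ outerRadius ω
  refine ⟨fun hμ => ⟨not_lt.1 fun h => hμ ?_, not_lt.1 fun h => hμ ?_⟩,
    fun ⟨h₁, h₂⟩ => notMem_localResolventSet_weightedShift hpos hM hS hx hx0 h₁ h₂⟩
  · exact mem_localResolventSet_of_mem_backwardOrbitRadiusGE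
      (span_basis_le_backwardOrbitRadiusGE hpos hS hx0) h
  · exact mem_localResolventSet_of_mem_forwardOrbitRadiusLE (outerRadius_nonneg hpos hM)
      (span_basis_le_forwardOrbitRadiusLE hpos hM hS hx0) h
end
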